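/- arXiv:math/0211080 — 7 statements merged into one kernel-verified Lean document; each statement's English description precedes it below -/
import Mathlib

section
/- Let ν ≥ 1, let f be a smooth function of (u_1,…,u_ν), let Ξ be a constant invertible symmetric ν×ν matrix, and let g_f on ℝ^{ν+2} be given in the frame e_0 = ∂_x, e_a = ∂_{u_a}, e_{ν+1} = ∂_y by g_f(e_0,e_0) = f(u), g_f(e_0,e_{ν+1}) = 1, g_f(e_a,e_b) = Ξ_{ab}, all other products 0. Let R_{ijkl} be the curvature components of g_f and Γ_{ij}{}^k its Christoffel symbols of the second kind, and define the covariant derivative curvature components R_{ijkl;n} := ∂_n R_{ijkl} − Σ_p (Γ_{ni}{}^p R_{pjkl} + Γ_{nj}{}^p R_{ipkl} + Γ_{nk}{}^p R_{ijpl} + Γ_{nl}{}^p R_{ijkp}). Then R_{0ab0;c} = −(1/2) ∂_{u_a} ∂_{u_b} ∂_{u_c} f for 1 ≤ a,b,c ≤ ν, and every component R_{ijkl;n} not obtained from these via the symmetries R_{ijkl;n} = −R_{jikl;n} = −R_{ijlk;n} = R_{klij;n} is zero. -/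
noncomputable section

/-- The partial derivative of `h` at `p` in the `i`-th coordinate direction. -/
def pd {n : ℕ} (h : (Fin n → ℝ) → ℝ) (i : Fin n) (p : Fin n → ℝ) : ℝ :=
  fderiv ℝ h p (Pi.single i 1)

/-- The index in `Fin (ν+2)` corresponding to the coordinate `u_a`. -/
def uidx {ν : ℕ} (a : Fin ν) : Fin (ν + 2) := ⟨a.1 + 1, by omega⟩

/-- The `u`-coordinates of a point of `ℝ^{ν+2}`. -/
def uC {ν : ℕ} (p : Fin (ν + 2) → ℝ) : Fin ν → ℝ := fun a => p (uidx a)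

/-- The metric `g_f` in the coordinate frame. -/
def gmet {ν : ℕ} (f : (Fin ν → ℝ) → ℝ) (Ξ : Matrix (Fin ν) (Fin ν) ℝ)
    (p : Fin (ν + 2) → ℝ) : Matrix (Fin (ν + 2)) (Fin (ν + 2)) ℝ := fun i j =>
  if i.1 = 0 ∧ j.1 = 0 then f (uC p)
  else if (i.1 = 0 ∧ j.1 = ν + 1) ∨ (i.1 = ν + 1 ∧ j.1 = 0) then 1
  else if h : 1 ≤ i.1 ∧ i.1 ≤ ν ∧ 1 ≤ j.1 ∧ j.1 ≤ ν then
    Ξ ⟨i.1 - 1, by omega⟩ ⟨j.1 - 1, by omega⟩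
  else 0

/-- Christoffel symbols of the first kind. -/
def Γ₁ {ν : ℕ} (f : (Fin ν → ℝ) → ℝ) (Ξ : Matrix (Fin ν) (Fin ν) ℝ)
    (p : Fin (ν + 2) → ℝ) (i j k : Fin (ν + 2)) : ℝ :=
  (1 / 2) * (pd (fun q => gmet f Ξ q j k) i p + pd (fun q => gmet f Ξ q i k) j p
    - pd (fun q => gmet f Ξ q i j) k p)

/-- Christoffel symbols of the second kind. -/
def Γ₂ {ν : ℕ} (f : (Fin ν → ℝ) → ℝ) (Ξ : Matrix (Fin ν) (Fin ν) ℝ)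
    (p : Fin (ν + 2) → ℝ) (i j k : Fin (ν + 2)) : ℝ :=
  ∑ l, (gmet f Ξ p)⁻¹ k l * Γ₁ f Ξ p i j l

/-- The components of the curvature tensor. -/
def Rc {ν : ℕ} (f : (Fin ν → ℝ) → ℝ) (Ξ : Matrix (Fin ν) (Fin ν) ℝ)
    (p : Fin (ν + 2) → ℝ) (i j k l : Fin (ν + 2)) : ℝ :=
  pd (fun q => Γ₁ f Ξ q j k l) i p - pd (fun q => Γ₁ f Ξ q i k l) j p
    + ∑ n, (Γ₁ f Ξ p i n l * Γ₂ f Ξ p j k n - Γ₁ f Ξ p j n l * Γ₂ f Ξ p i k n)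

/-- The components of the covariant derivative of the curvature tensor. -/
def RcD {ν : ℕ} (f : (Fin ν → ℝ) → ℝ) (Ξ : Matrix (Fin ν) (Fin ν) ℝ)
    (p : Fin (ν + 2) → ℝ) (i j k l n : Fin (ν + 2)) : ℝ :=
  pd (fun q => Rc f Ξ q i j k l) n p
    - ∑ m, (Γ₂ f Ξ p n i m * Rc f Ξ p m j k l + Γ₂ f Ξ p n j m * Rc f Ξ p i m k l
      + Γ₂ f Ξ p n k m * Rc f Ξ p i j m l + Γ₂ f Ξ p n l m * Rc f Ξ p i j k m)

namespace Aux


variable {ν : ℕ}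

lemma uidx_ne_zero (a : Fin ν) : uidx a ≠ 0 := by
  simp [uidx, Fin.ext_iff]

lemma uidx_ne_last (a : Fin ν) : uidx a ≠ Fin.last (ν+1) := by
  have := a.2; simp [uidx, Fin.ext_iff]; omega

lemma zero_ne_last : (0 : Fin (ν+2)) ≠ Fin.last (ν+1) := by
  simp [Fin.ext_iff]

lemma uidx_inj {a b : Fin ν} : uidx a = uidx b ↔ a = b := by
  simp [uidx, Fin.ext_iff]

lemma cases3 (i : Fin (ν+2)) : i = 0 ∨ (∃ a, i = uidx a) ∨ i = Fin.last (ν+1) := by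
  rcases Nat.lt_trichotomy i.1 (ν+1) with h | h | h
  · rcases Nat.eq_zero_or_pos i.1 with h0 | h0
    · exact Or.inl (Fin.ext h0)
    · exact Or.inr (Or.inl ⟨⟨i.1 - 1, by omega⟩, by simp [uidx, Fin.ext_iff]; omega⟩)
  · exact Or.inr (Or.inr (Fin.ext h))
  · exact absurd i.2 (by omega)

lemma sum3 (g : Fin (ν+2) → ℝ) :
    ∑ i, g i = g 0 + (∑ a : Fin ν, g (uidx a)) + g (Fin.last (ν+1)) := by
  rw [Fin.sum_univ_succ, Fin.sum_univ_castSucc]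
  have h1 : ∀ a : Fin ν, (Fin.succ (Fin.castSucc a)) = uidx a := by
    intro a; simp [uidx, Fin.ext_iff]
  have h2 : Fin.succ (Fin.last ν) = Fin.last (ν+1) := by simp [Fin.ext_iff]
  simp only [h1, h2]; ring

/- pd basic lemmas -/
lemma pd_const (c : ℝ) (i : Fin ν) (p) : pd (fun _ => c) i p = 0 := by
  simp [pd, fderiv_const]

lemma pd_add {h₁ h₂ : (Fin ν → ℝ) → ℝ} {p} (d1 : DifferentiableAt ℝ h₁ p)
    (d2 : DifferentiableAt ℝ h₂ p) (i) :
    pd (fun v => h₁ v + h₂ v) i p = pd h₁ i p + pd h₂ i p := by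
  simp [pd, fderiv_fun_add d1 d2]

lemma pd_sub {h₁ h₂ : (Fin ν → ℝ) → ℝ} {p} (d1 : DifferentiableAt ℝ h₁ p)
    (d2 : DifferentiableAt ℝ h₂ p) (i) :
    pd (fun v => h₁ v - h₂ v) i p = pd h₁ i p - pd h₂ i p := by
  simp [pd, fderiv_fun_sub d1 d2]

lemma pd_const_mul {h : (Fin ν → ℝ) → ℝ} {p} (d : DifferentiableAt ℝ h p) (c : ℝ) (i) :
    pd (fun v => c * h v) i p = c * pd h i p := by
  simp [pd, fderiv_const_mul d c]

/- the linear map uC -/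
def LuC : ((Fin (ν+2)) → ℝ) →L[ℝ] ((Fin ν) → ℝ) :=
  ContinuousLinearMap.pi fun a => ContinuousLinearMap.proj (uidx a)

lemma LuC_apply (p : Fin (ν+2) → ℝ) : LuC p = uC p := rfl

lemma LuC_single_uidx (c : Fin ν) :
    (LuC (Pi.single (uidx c) (1:ℝ)) : Fin ν → ℝ) = Pi.single c 1 := by
  funext a
  simp only [LuC, ContinuousLinearMap.pi_apply, ContinuousLinearMap.proj_apply]
  rcases eq_or_ne c a with rfl | h
  · simp
  · rw [Pi.single_eq_of_ne (fun hh => h (uidx_inj.mp hh.symm)), Pi.single_eq_of_ne (Ne.symm h)]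

lemma LuC_single_zero : (LuC (Pi.single (0 : Fin (ν+2)) (1:ℝ)) : Fin ν → ℝ) = 0 := by
  funext a
  simp only [LuC, ContinuousLinearMap.pi_apply, ContinuousLinearMap.proj_apply, Pi.zero_apply]
  rw [Pi.single_eq_of_ne (uidx_ne_zero a)]

lemma LuC_single_last : (LuC (Pi.single (Fin.last (ν+1)) (1:ℝ)) : Fin ν → ℝ) = 0 := by
  funext a
  simp only [LuC, ContinuousLinearMap.pi_apply, ContinuousLinearMap.proj_apply, Pi.zero_apply]
  rw [Pi.single_eq_of_ne (uidx_ne_last a)]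

/- dd -/
def dd (h : (Fin ν → ℝ) → ℝ) (i : Fin (ν+2)) (v : Fin ν → ℝ) : ℝ :=
  if hi : 1 ≤ i.1 ∧ i.1 ≤ ν then pd h ⟨i.1 - 1, by omega⟩ v else 0

lemma dd_uidx (h : (Fin ν → ℝ) → ℝ) (c : Fin ν) (v) : dd h (uidx c) v = pd h c v := by
  have hc := c.2
  rw [dd, dif_pos (by simp [uidx])]
  congr 1

lemma dd_uidx_fun (h : (Fin ν → ℝ) → ℝ) (c : Fin ν) : dd h (uidx c) = pd h c :=
  funext fun v => dd_uidx h c v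

lemma dd_zero_idx (h : (Fin ν → ℝ) → ℝ) (v) : dd h 0 v = 0 := by
  rw [dd, dif_neg]; simp

lemma dd_last_idx (h : (Fin ν → ℝ) → ℝ) (v) : dd h (Fin.last (ν+1)) v = 0 := by
  rw [dd, dif_neg]; simp

lemma dd_zero_idx_fun (h : (Fin ν → ℝ) → ℝ) : dd h 0 = fun _ => 0 :=
  funext fun v => dd_zero_idx h v

lemma dd_last_idx_fun (h : (Fin ν → ℝ) → ℝ) : dd h (Fin.last (ν+1)) = fun _ => 0 :=
  funext fun v => dd_last_idx h v

lemma dd_constfun (c : ℝ) (y : Fin (ν+2)) (v) : dd (fun _ => c) y v = 0 := by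
  rw [dd]; split
  · exact pd_const c _ v
  · rfl

/- key composition lemma -/
lemma pd_comp {h : (Fin ν → ℝ) → ℝ} {p : Fin (ν+2) → ℝ}
    (hd : DifferentiableAt ℝ h (uC p)) (i : Fin (ν+2)) :
    pd (fun q => h (uC q)) i p = dd h i (uC p) := by
  have hfun : (fun q : Fin (ν+2) → ℝ => h (uC q)) = h ∘ (LuC : _ →L[ℝ] _) := rfl
  have hL : DifferentiableAt ℝ (LuC : ((Fin (ν+2)) → ℝ) →L[ℝ] ((Fin ν) → ℝ)) p :=
    (LuC).differentiableAt
  have key : pd (fun q => h (uC q)) i p = fderiv ℝ h (uC p) (LuC (Pi.single i 1)) := by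
    rw [pd, hfun, fderiv_comp p (by rwa [LuC_apply]) hL]
    simp [ContinuousLinearMap.fderiv, LuC_apply]
  rcases cases3 i with rfl | ⟨c, rfl⟩ | rfl
  · rw [key, LuC_single_zero, dd_zero_idx]; simp
  · rw [key, LuC_single_uidx, dd_uidx]; rfl
  · rw [key, LuC_single_last, dd_last_idx]; simp

end Aux
namespace Aux

variable {ν : ℕ} (f : (Fin ν → ℝ) → ℝ) (Ξ : Matrix (Fin ν) (Fin ν) ℝ)

lemma gmet_00 (p) : gmet f Ξ p 0 0 = f (uC p) := by simp [gmet]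

lemma gmet_0u (p) (a : Fin ν) : gmet f Ξ p 0 (uidx a) = 0 := by
  have ha := a.2; simp [gmet, uidx]; try omega

lemma gmet_u0 (p) (a : Fin ν) : gmet f Ξ p (uidx a) 0 = 0 := by
  have ha := a.2; simp [gmet, uidx]; try omega

lemma gmet_0l (p) : gmet f Ξ p 0 (Fin.last (ν+1)) = 1 := by
  simp [gmet, Fin.last]

lemma gmet_l0 (p) : gmet f Ξ p (Fin.last (ν+1)) 0 = 1 := by
  simp [gmet, Fin.last]

lemma gmet_uu (p) (a b : Fin ν) : gmet f Ξ p (uidx a) (uidx b) = Ξ a b := by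
  have ha := a.2; have hb := b.2
  rw [gmet, if_neg (by simp [uidx]), if_neg (by simp [uidx]; try omega),
    dif_pos (by simp [uidx])]
  congr 1

lemma gmet_ul (p) (a : Fin ν) : gmet f Ξ p (uidx a) (Fin.last (ν+1)) = 0 := by
  have ha := a.2; simp [gmet, uidx, Fin.last]; try omega

lemma gmet_lu (p) (a : Fin ν) : gmet f Ξ p (Fin.last (ν+1)) (uidx a) = 0 := by
  have ha := a.2; simp [gmet, uidx, Fin.last]; try omega

lemma gmet_ll (p) : gmet f Ξ p (Fin.last (ν+1)) (Fin.last (ν+1)) = 0 := by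
  simp [gmet, Fin.last]

/-- the inverse metric, as a function of the u-coordinates -/
def giv (m l : Fin (ν+2)) (v : Fin ν → ℝ) : ℝ :=
  if (m = 0 ∧ l = Fin.last (ν+1)) ∨ (m = Fin.last (ν+1) ∧ l = 0) then 1
  else if m = Fin.last (ν+1) ∧ l = Fin.last (ν+1) then -(f v)
  else if h : 1 ≤ m.1 ∧ m.1 ≤ ν ∧ 1 ≤ l.1 ∧ l.1 ≤ ν then
    Ξ⁻¹ ⟨m.1 - 1, by omega⟩ ⟨l.1 - 1, by omega⟩
  else 0

lemma giv_00 (v) : giv f Ξ 0 0 v = 0 := by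
  simp [giv, (zero_ne_last (ν := ν)), Ne.symm (zero_ne_last (ν := ν))]

lemma giv_0u (v) (a : Fin ν) : giv f Ξ 0 (uidx a) v = 0 := by
  simp [giv, uidx_ne_last, uidx_ne_zero, Ne.symm (zero_ne_last (ν := ν)), zero_ne_last (ν := ν)]

lemma giv_0l (v) : giv f Ξ 0 (Fin.last (ν+1)) v = 1 := by simp [giv]

lemma giv_u0 (v) (a : Fin ν) : giv f Ξ (uidx a) 0 v = 0 := by
  have ha := a.2
  simp [giv, uidx_ne_last, uidx_ne_zero]

lemma giv_uu (v) (a b : Fin ν) : giv f Ξ (uidx a) (uidx b) v = Ξ⁻¹ a b := by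
  have ha := a.2; have hb := b.2
  rw [giv, if_neg (by simp [uidx_ne_zero, uidx_ne_last]),
    if_neg (by simp [uidx_ne_last]), dif_pos (by simp [uidx])]
  congr 1

lemma giv_ul (v) (a : Fin ν) : giv f Ξ (uidx a) (Fin.last (ν+1)) v = 0 := by
  rw [giv, if_neg (by simp [uidx_ne_zero, uidx_ne_last]),
    if_neg (by simp [uidx_ne_last]), dif_neg (by simp [Fin.val_last])]

lemma giv_l0 (v) : giv f Ξ (Fin.last (ν+1)) 0 v = 1 := by
  simp [giv]

lemma giv_lu (v) (a : Fin ν) : giv f Ξ (Fin.last (ν+1)) (uidx a) v = 0 := by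
  rw [giv, if_neg (by simp [uidx_ne_zero, uidx_ne_last, Ne.symm (zero_ne_last (ν := ν))]),
    if_neg (by simp [uidx_ne_last]), dif_neg (by simp [Fin.val_last])]

lemma giv_ll (v) : giv f Ξ (Fin.last (ν+1)) (Fin.last (ν+1)) v = -(f v) := by
  simp [giv, Ne.symm (zero_ne_last (ν := ν)), zero_ne_last (ν := ν)]

def ginv (p : Fin (ν+2) → ℝ) : Matrix (Fin (ν+2)) (Fin (ν+2)) ℝ :=
  fun m l => giv f Ξ m l (uC p)

@[simp] lemma ginv_apply (p) (m l) : ginv f Ξ p m l = giv f Ξ m l (uC p) := rfl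

lemma gmet_mul_ginv (hΞinv : IsUnit Ξ.det) (p) :
    gmet f Ξ p * ginv f Ξ p = 1 := by
  ext i j
  rw [Matrix.mul_apply, sum3]
  rcases cases3 i with rfl | ⟨a, rfl⟩ | rfl <;> rcases cases3 j with rfl | ⟨b, rfl⟩ | rfl <;>
    simp [gmet_00, gmet_0u, gmet_u0, gmet_0l, gmet_l0, gmet_uu, gmet_ul, gmet_lu, gmet_ll,
      giv_00, giv_0u, giv_0l, giv_u0, giv_uu, giv_ul, giv_l0, giv_lu, giv_ll,
      Matrix.one_apply, uidx_ne_zero, uidx_ne_last, zero_ne_last (ν := ν),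
      Ne.symm (uidx_ne_zero _), Ne.symm (uidx_ne_last _), Ne.symm (zero_ne_last (ν := ν)),
      uidx_inj, ginv_apply]
  · rw [← Matrix.mul_apply, Matrix.mul_nonsing_inv _ hΞinv, Matrix.one_apply]

lemma gmet_inv_eq (hΞinv : IsUnit Ξ.det) (p) :
    (gmet f Ξ p)⁻¹ = ginv f Ξ p :=
  Matrix.inv_eq_right_inv (gmet_mul_ginv f Ξ hΞinv p)

end Aux
namespace Aux

variable {ν : ℕ} (f : (Fin ν → ℝ) → ℝ) (Ξ : Matrix (Fin ν) (Fin ν) ℝ)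

/- smoothness -/
lemma smooth_pd {h : (Fin ν → ℝ) → ℝ} (hh : ContDiff ℝ (⊤ : ℕ∞) h) (c : Fin ν) :
    ContDiff ℝ (⊤ : ℕ∞) (pd h c) :=
  (hh.fderiv_right (by simp)).clm_apply contDiff_const

lemma smooth_dd {h : (Fin ν → ℝ) → ℝ} (hh : ContDiff ℝ (⊤ : ℕ∞) h) (i : Fin (ν+2)) :
    ContDiff ℝ (⊤ : ℕ∞) (dd h i) := by
  rcases cases3 i with rfl | ⟨c, rfl⟩ | rfl
  · rw [dd_zero_idx_fun]; exact contDiff_const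
  · rw [dd_uidx_fun]; exact smooth_pd hh c
  · rw [dd_last_idx_fun]; exact contDiff_const

lemma diff_dd {h : (Fin ν → ℝ) → ℝ} (hh : ContDiff ℝ (⊤ : ℕ∞) h) (i : Fin (ν+2)) (v) :
    DifferentiableAt ℝ (dd h i) v :=
  ((smooth_dd hh i).differentiable (by simp)).differentiableAt

/- second derivative symmetry -/
lemma pd_comm {h : (Fin ν → ℝ) → ℝ} (hh : ContDiff ℝ (⊤ : ℕ∞) h) (x y : Fin ν) (v) :
    pd (pd h x) y v = pd (pd h y) x v := by
  have h1 : DifferentiableAt ℝ (fderiv ℝ h) v :=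
    (((hh.fderiv_right (m := 1) (WithTop.coe_le_coe.mpr le_top))).differentiable one_ne_zero).differentiableAt
  have key : ∀ (x y : Fin ν),
      pd (pd h x) y v = fderiv ℝ (fderiv ℝ h) v (Pi.single y 1) (Pi.single x 1) := by
    intro x y
    have : pd h x = fun w => (fderiv ℝ h w) (Pi.single x 1) := rfl
    rw [pd, this, fderiv_clm_apply h1 (differentiableAt_const _)]
    simp
  rw [key, key]
  exact (hh.contDiffAt.isSymmSndFDerivAt (by simp; exact WithTop.coe_le_coe.mpr le_top)) _ _

/- indicator -/
def e (x : Fin (ν+2)) : ℝ := if x = 0 then 1 else 0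

@[simp] lemma e_0 : e (0 : Fin (ν+2)) = 1 := by simp [e]
@[simp] lemma e_u (a : Fin ν) : e (uidx a) = 0 := by simp [e, uidx_ne_zero]
@[simp] lemma e_last : e (Fin.last (ν+1)) = 0 := by
  simp [e, Ne.symm (zero_ne_last (ν := ν)), zero_ne_last (ν := ν)]

/- derivative of the metric -/
lemma pd_gmet (hf : ContDiff ℝ (⊤ : ℕ∞) f) (p) (i j k : Fin (ν+2)) :
    pd (fun q => gmet f Ξ q j k) i p = e j * e k * dd f i (uC p) := by
  by_cases hjk : j = 0 ∧ k = 0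
  · obtain ⟨rfl, rfl⟩ := hjk
    have : (fun q => gmet f Ξ q 0 0) = fun q => f (uC q) := funext fun q => gmet_00 f Ξ q
    rw [this, pd_comp ((hf.differentiable (by simp)).differentiableAt)]
    simp
  · have hC : ¬((j : Fin (ν+2)).1 = 0 ∧ (k : Fin (ν+2)).1 = 0) := by
      exact fun hh => hjk ⟨Fin.ext (by simpa using hh.1), Fin.ext (by simpa using hh.2)⟩
    have : (fun q => gmet f Ξ q j k) = fun _ => gmet f Ξ 0 j k := by
      funext q; rw [gmet, gmet, if_neg hC, if_neg hC]
    rw [this, pd_const]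
    rcases not_and_or.mp hjk with hj | hk
    · simp [e, hj]
    · simp [e, hk]

/- Christoffel symbols of the first kind, closed form -/
def φ (i j k : Fin (ν+2)) : (Fin ν → ℝ) → ℝ := fun v =>
  (1/2) * (e j * e k * dd f i v + e i * e k * dd f j v - e i * e j * dd f k v)

lemma Γ₁_eq (hf : ContDiff ℝ (⊤ : ℕ∞) f) (p) (i j k) :
    Γ₁ f Ξ p i j k = φ f i j k (uC p) := by
  rw [Γ₁, pd_gmet f Ξ hf, pd_gmet f Ξ hf, pd_gmet f Ξ hf]; rfl

lemma smooth_φ (hf : ContDiff ℝ (⊤ : ℕ∞) f) (i j k) : ContDiff ℝ (⊤ : ℕ∞) (φ f i j k) :=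
  contDiff_const.mul (((contDiff_const.mul (smooth_dd hf i)).add
    (contDiff_const.mul (smooth_dd hf j))).sub (contDiff_const.mul (smooth_dd hf k)))

lemma diff_φ (hf : ContDiff ℝ (⊤ : ℕ∞) f) (i j k) (v) : DifferentiableAt ℝ (φ f i j k) v :=
  ((smooth_φ f hf i j k).differentiable (by simp)).differentiableAt

/- Christoffel symbols of the second kind, closed form -/
def γ₂ (x y m : Fin (ν+2)) : (Fin ν → ℝ) → ℝ := fun v =>
  ∑ l, giv f Ξ m l v * φ f x y l v

lemma Γ₂_eq (hf : ContDiff ℝ (⊤ : ℕ∞) f) (hΞinv : IsUnit Ξ.det) (p) (i j k) :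
    Γ₂ f Ξ p i j k = γ₂ f Ξ i j k (uC p) := by
  rw [Γ₂, gmet_inv_eq f Ξ hΞinv]
  exact Finset.sum_congr rfl fun l _ => by rw [ginv_apply, Γ₁_eq f Ξ hf]

/- φ special values -/
lemma φ_last (x y : Fin (ν+2)) (v) : φ f x y (Fin.last (ν+1)) v = 0 := by
  simp [φ, dd_last_idx]

lemma φ_mid_last (x y : Fin (ν+2)) (v) : φ f x (Fin.last (ν+1)) y v = 0 := by
  simp [φ, dd_last_idx]

lemma φ_mid_u (x y : Fin (ν+2)) (a : Fin ν) (v) :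
    φ f x (uidx a) y v = (1/2) * (e x * e y * pd f a v) := by
  simp [φ, dd_uidx]; try ring

lemma φ_u (x y : Fin (ν+2)) (a : Fin ν) (v) :
    φ f x y (uidx a) v = -((1/2) * (e x * e y * pd f a v)) := by
  simp [φ, dd_uidx]; try ring

/- γ₂ special values -/
lemma γ₂_0 (x y : Fin (ν+2)) (v) : γ₂ f Ξ x y 0 v = 0 := by
  rw [γ₂, sum3]
  simp [giv_00, giv_0u, giv_0l, φ_last]

lemma γ₂_u (x y : Fin (ν+2)) (a : Fin ν) (v) :
    γ₂ f Ξ x y (uidx a) v = e x * e y * (-(1/2) * ∑ b, Ξ⁻¹ a b * pd f b v) := by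
  rw [γ₂, sum3]
  simp only [giv_u0, giv_uu, giv_ul, φ_last, φ_u, zero_mul, mul_zero, add_zero, zero_add]
  simp only [Finset.mul_sum]
  exact Finset.sum_congr rfl fun b _ => by ring

/- the quadratic term in the curvature vanishes identically -/
lemma quad_zero (v) (i j k l : Fin (ν+2)) :
    ∑ n, (φ f i n l v * γ₂ f Ξ j k n v - φ f j n l v * γ₂ f Ξ i k n v) = 0 := by
  rw [sum3]
  simp only [γ₂_0, mul_zero, sub_zero, zero_sub, φ_mid_last, zero_mul, add_zero, neg_zero,
    sub_self, zero_add]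
  refine Finset.sum_eq_zero fun a _ => ?_
  rw [φ_mid_u, φ_mid_u, γ₂_u, γ₂_u]
  ring

end Aux
namespace Aux

variable {ν : ℕ} (f : (Fin ν → ℝ) → ℝ) (Ξ : Matrix (Fin ν) (Fin ν) ℝ)

/- curvature, closed form -/
def ρR (i j k l : Fin (ν+2)) : (Fin ν → ℝ) → ℝ := fun v =>
  dd (φ f j k l) i v - dd (φ f i k l) j v
    + ∑ n, (φ f i n l v * γ₂ f Ξ j k n v - φ f j n l v * γ₂ f Ξ i k n v)

lemma Rc_eq (hf : ContDiff ℝ (⊤ : ℕ∞) f) (hΞinv : IsUnit Ξ.det) (p) (i j k l) :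
    Rc f Ξ p i j k l = ρR f Ξ i j k l (uC p) := by
  rw [Rc, ρR]
  have h1 : (fun q => Γ₁ f Ξ q j k l) = fun q => φ f j k l (uC q) :=
    funext fun q => Γ₁_eq f Ξ hf q j k l
  have h2 : (fun q => Γ₁ f Ξ q i k l) = fun q => φ f i k l (uC q) :=
    funext fun q => Γ₁_eq f Ξ hf q i k l
  rw [h1, h2, pd_comp (diff_φ f hf j k l _), pd_comp (diff_φ f hf i k l _)]
  congr 1
  exact Finset.sum_congr rfl fun n _ => by
    rw [Γ₁_eq f Ξ hf, Γ₁_eq f Ξ hf, Γ₂_eq f Ξ hf hΞinv, Γ₂_eq f Ξ hf hΞinv]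

/- second-derivative building blocks -/
lemma dd_dd_zero_left (y : Fin (ν+2)) (v) : dd (dd f 0) y v = 0 := by
  rw [dd_zero_idx_fun, dd_constfun]

lemma dd_dd_last_left (y : Fin (ν+2)) (v) : dd (dd f (Fin.last (ν+1))) y v = 0 := by
  rw [dd_last_idx_fun, dd_constfun]

lemma dd₂_symm (hf : ContDiff ℝ (⊤ : ℕ∞) f) (x y : Fin (ν+2)) (v) :
    dd (dd f x) y v = dd (dd f y) x v := by
  rcases cases3 x with rfl | ⟨a, rfl⟩ | rfl <;> rcases cases3 y with rfl | ⟨b, rfl⟩ | rfl <;>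
      (try simp only [dd_dd_zero_left, dd_dd_last_left, dd_zero_idx, dd_last_idx]) <;>
      (try simp only [dd_uidx_fun, dd_uidx]) <;>
      try exact pd_comm hf a b v

/- expanding dd of φ -/
lemma dd_φ (hf : ContDiff ℝ (⊤ : ℕ∞) f) (i j k l : Fin (ν+2)) (v) :
    dd (φ f j k l) i v = (1/2) * (e k * e l * dd (dd f j) i v
      + e j * e l * dd (dd f k) i v - e j * e k * dd (dd f l) i v) := by
  rcases cases3 i with rfl | ⟨c, rfl⟩ | rfl
  · simp [dd_zero_idx]
  · rw [dd_uidx, dd_uidx_fun, dd_uidx_fun, dd_uidx_fun]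
    have D : ∀ x : Fin (ν+2), DifferentiableAt ℝ (dd f x) v := fun x => diff_dd hf x v
    have hφ : φ f j k l = fun v =>
        (1/2) * (e k * e l * dd f j v + e j * e l * dd f k v - e j * e k * dd f l v) := rfl
    rw [hφ, pd_const_mul (((((D j).const_mul _).fun_add ((D k).const_mul _)).fun_sub
      ((D l).const_mul _))) _ c,
      pd_sub (((D j).const_mul _).fun_add ((D k).const_mul _)) ((D l).const_mul _),
      pd_add ((D j).const_mul _) ((D k).const_mul _),
      pd_const_mul (D j) _ c, pd_const_mul (D k) _ c, pd_const_mul (D l) _ c]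
  · simp [dd_last_idx]

end Aux
namespace Aux

variable {ν : ℕ} (f : (Fin ν → ℝ) → ℝ) (Ξ : Matrix (Fin ν) (Fin ν) ℝ)

/- closed form for the curvature components -/
lemma ρ_val (hf : ContDiff ℝ (⊤ : ℕ∞) f) (i j k l : Fin (ν+2)) (v) :
    ρR f Ξ i j k l v = (1/2) * (e j * e l * dd (dd f k) i v
      - e j * e k * dd (dd f l) i v - e i * e l * dd (dd f k) j v
      + e i * e k * dd (dd f l) j v) := by
  rw [ρR, quad_zero, add_zero, dd_φ f hf, dd_φ f hf, dd₂_symm f hf j i]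
  ring

lemma smooth_ρR (hf : ContDiff ℝ (⊤ : ℕ∞) f) (i j k l) : ContDiff ℝ (⊤ : ℕ∞) (ρR f Ξ i j k l) := by
  have : ρR f Ξ i j k l = fun v => (1/2) * (e j * e l * dd (dd f k) i v
      - e j * e k * dd (dd f l) i v - e i * e l * dd (dd f k) j v
      + e i * e k * dd (dd f l) j v) := funext fun v => ρ_val f Ξ hf i j k l v
  rw [this]
  exact contDiff_const.mul ((((contDiff_const.mul (smooth_dd (smooth_dd hf k) i)).sub
    (contDiff_const.mul (smooth_dd (smooth_dd hf l) i))).sub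
    (contDiff_const.mul (smooth_dd (smooth_dd hf k) j))).add
    (contDiff_const.mul (smooth_dd (smooth_dd hf l) j)))

/- dd of the curvature components -/
lemma dd_ρ (hf : ContDiff ℝ (⊤ : ℕ∞) f) (i j k l n : Fin (ν+2)) (v) :
    dd (ρR f Ξ i j k l) n v = (1/2) * (e j * e l * dd (dd (dd f k) i) n v
      - e j * e k * dd (dd (dd f l) i) n v - e i * e l * dd (dd (dd f k) j) n v
      + e i * e k * dd (dd (dd f l) j) n v) := by
  have hρ : ρR f Ξ i j k l = fun v => (1/2) * (e j * e l * dd (dd f k) i v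
      - e j * e k * dd (dd f l) i v - e i * e l * dd (dd f k) j v
      + e i * e k * dd (dd f l) j v) := funext fun v => ρ_val f Ξ hf i j k l v
  rcases cases3 n with rfl | ⟨c, rfl⟩ | rfl
  · simp [dd_zero_idx]
  · have D : ∀ x y : Fin (ν+2), DifferentiableAt ℝ (dd (dd f x) y) v :=
      fun x y => diff_dd (smooth_dd hf x) y v
    rw [dd_uidx]
    simp only [dd_uidx]
    rw [hρ, pd_const_mul ((((((D k i).const_mul _).fun_sub ((D l i).const_mul _)).fun_sub
        ((D k j).const_mul _)).fun_add ((D l j).const_mul _))) _ c,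
      pd_add ((((D k i).const_mul _).fun_sub ((D l i).const_mul _)).fun_sub
        ((D k j).const_mul _)) ((D l j).const_mul _),
      pd_sub (((D k i).const_mul _).fun_sub ((D l i).const_mul _)) ((D k j).const_mul _),
      pd_sub ((D k i).const_mul _) ((D l i).const_mul _),
      pd_const_mul (D k i) _ c, pd_const_mul (D l i) _ c,
      pd_const_mul (D k j) _ c, pd_const_mul (D l j) _ c]
  · simp [dd_last_idx]

end Aux
namespace Aux

variable {ν : ℕ} (f : (Fin ν → ℝ) → ℝ) (Ξ : Matrix (Fin ν) (Fin ν) ℝ)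

lemma RcD_eq (hf : ContDiff ℝ (⊤ : ℕ∞) f) (hΞinv : IsUnit Ξ.det) (p) (i j k l n) :
    RcD f Ξ p i j k l n = dd (ρR f Ξ i j k l) n (uC p)
      - ∑ m, (γ₂ f Ξ n i m (uC p) * ρR f Ξ m j k l (uC p)
        + γ₂ f Ξ n j m (uC p) * ρR f Ξ i m k l (uC p)
        + γ₂ f Ξ n k m (uC p) * ρR f Ξ i j m l (uC p)
        + γ₂ f Ξ n l m (uC p) * ρR f Ξ i j k m (uC p)) := by
  rw [RcD]
  have h1 : (fun q => Rc f Ξ q i j k l) = fun q => ρR f Ξ i j k l (uC q) :=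
    funext fun q => Rc_eq f Ξ hf hΞinv q i j k l
  rw [h1, pd_comp (((smooth_ρR f Ξ hf i j k l).differentiable (by simp)).differentiableAt)]
  congr 1
  exact Finset.sum_congr rfl fun m _ => by
    rw [Γ₂_eq f Ξ hf hΞinv, Γ₂_eq f Ξ hf hΞinv, Γ₂_eq f Ξ hf hΞinv, Γ₂_eq f Ξ hf hΞinv,
      Rc_eq f Ξ hf hΞinv, Rc_eq f Ξ hf hΞinv, Rc_eq f Ξ hf hΞinv, Rc_eq f Ξ hf hΞinv]

/- curvature vanishes when any index is `last` -/
lemma ρ_last1 (hf : ContDiff ℝ (⊤ : ℕ∞) f) (j k l) (v) :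
    ρR f Ξ (Fin.last (ν+1)) j k l v = 0 := by
  rw [ρ_val f Ξ hf]; simp [dd_last_idx]

lemma ρ_last2 (hf : ContDiff ℝ (⊤ : ℕ∞) f) (i k l) (v) :
    ρR f Ξ i (Fin.last (ν+1)) k l v = 0 := by
  rw [ρ_val f Ξ hf]; simp [dd_last_idx]

lemma ρ_last3 (hf : ContDiff ℝ (⊤ : ℕ∞) f) (i j l) (v) :
    ρR f Ξ i j (Fin.last (ν+1)) l v = 0 := by
  rw [ρ_val f Ξ hf]; simp [dd_dd_last_left]

lemma ρ_last4 (hf : ContDiff ℝ (⊤ : ℕ∞) f) (i j k) (v) :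
    ρR f Ξ i j k (Fin.last (ν+1)) v = 0 := by
  rw [ρ_val f Ξ hf]; simp [dd_dd_last_left]

/- the Christoffel correction terms in the covariant derivative vanish identically -/
lemma cor_zero (hf : ContDiff ℝ (⊤ : ℕ∞) f) (i j k l n : Fin (ν+2)) (v) :
    ∑ m, (γ₂ f Ξ n i m v * ρR f Ξ m j k l v
        + γ₂ f Ξ n j m v * ρR f Ξ i m k l v
        + γ₂ f Ξ n k m v * ρR f Ξ i j m l v
        + γ₂ f Ξ n l m v * ρR f Ξ i j k m v) = 0 := by
  rw [sum3]
  rw [γ₂_0, γ₂_0, γ₂_0, γ₂_0, ρ_last1 f Ξ hf, ρ_last2 f Ξ hf, ρ_last3 f Ξ hf, ρ_last4 f Ξ hf]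
  simp only [zero_mul, mul_zero, add_zero, zero_add]
  refine Finset.sum_eq_zero fun a _ => ?_
  rw [γ₂_u, γ₂_u, γ₂_u, γ₂_u, ρ_val f Ξ hf, ρ_val f Ξ hf, ρ_val f Ξ hf, ρ_val f Ξ hf]
  simp only [e_u, zero_mul, mul_zero, sub_zero, zero_sub, add_zero, zero_add]
  ring

end Aux
namespace Aux

variable {ν : ℕ} (f : (Fin ν → ℝ) → ℝ)

lemma dd_constfun_fun (c : ℝ) (y : Fin (ν+2)) : dd (fun _ => c) y = fun _ => (0:ℝ) :=
  funext fun v => dd_constfun c y v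

lemma ddd_left0 (y n : Fin (ν+2)) (v) : dd (dd (dd f 0) y) n v = 0 := by
  rw [dd_zero_idx_fun, dd_constfun_fun, dd_constfun]

lemma ddd_leftlast (y n : Fin (ν+2)) (v) : dd (dd (dd f (Fin.last (ν+1))) y) n v = 0 := by
  rw [dd_last_idx_fun, dd_constfun_fun, dd_constfun]

lemma ddd_mid0 (x n : Fin (ν+2)) (v) : dd (dd (dd f x) 0) n v = 0 := by
  rw [dd_zero_idx_fun, dd_constfun]

lemma ddd_midlast (x n : Fin (ν+2)) (v) : dd (dd (dd f x) (Fin.last (ν+1))) n v = 0 := by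
  rw [dd_last_idx_fun, dd_constfun]

end Aux

open Aux in
/-- the covariant derivative curvature components of `g_f` satisfy
`R_{0ab0;c} = -(1/2) ∂_{u_a} ∂_{u_b} ∂_{u_c} f`, and every component not obtained from these
by the curvature symmetries vanishes. -/
theorem covariant_derivative_curvature_components (ν : ℕ) (hν : 1 ≤ ν)
    (f : (Fin ν → ℝ) → ℝ) (hf : ContDiff ℝ (⊤ : ℕ∞) f)
    (Ξ : Matrix (Fin ν) (Fin ν) ℝ) (hΞsym : Ξ.IsSymm) (hΞinv : IsUnit Ξ.det) :
    ∀ p : Fin (ν + 2) → ℝ,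
      (∀ a b c : Fin ν,
        RcD f Ξ p 0 (uidx a) (uidx b) 0 (uidx c) =
          -((1 / 2) * pd (fun w => pd (fun v => pd f c v) b w) a (uC p))) ∧
      (∀ i j k l n : Fin (ν + 2),
        (¬ ∃ a b c : Fin ν,
          (((i = 0 ∧ j = uidx a) ∨ (i = uidx a ∧ j = 0)) ∧
           ((k = uidx b ∧ l = 0) ∨ (k = 0 ∧ l = uidx b))) ∧ n = uidx c) →
        RcD f Ξ p i j k l n = 0) := by
  intro p
  constructor
  · intro a b c
    rw [RcD_eq f Ξ hf hΞinv, cor_zero f Ξ hf, sub_zero, dd_ρ f Ξ hf]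
    simp only [e_0, e_u, one_mul, zero_mul, mul_zero, mul_one, sub_zero, zero_sub,
      add_zero, zero_add, neg_zero]
    rw [dd_uidx, dd_uidx_fun, dd_uidx_fun]
    rw [pd_comm (smooth_pd hf b) a c]
    rw [show pd (pd f b) c = pd (pd f c) b from funext fun w => pd_comm hf b c w]
    ring
  · intro i j k l n h
    rw [RcD_eq f Ξ hf hΞinv, cor_zero f Ξ hf, sub_zero, dd_ρ f Ξ hf]
    rcases cases3 i with rfl | ⟨a1, rfl⟩ | rfl <;>
      rcases cases3 j with rfl | ⟨a2, rfl⟩ | rfl <;>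
      rcases cases3 k with rfl | ⟨b1, rfl⟩ | rfl <;>
      rcases cases3 l with rfl | ⟨b2, rfl⟩ | rfl <;>
      simp only [e_0, e_u, e_last, one_mul, zero_mul, mul_zero, mul_one, sub_zero, zero_sub,
        add_zero, zero_add, neg_zero, sub_self, neg_neg, mul_neg,
        ddd_left0, ddd_leftlast, ddd_mid0, ddd_midlast] <;>
      try norm_num
    all_goals (rcases cases3 n with rfl | ⟨c1, rfl⟩ | rfl)
    all_goals try simp [dd_zero_idx, dd_last_idx]
    all_goals (refine absurd ?_ h; first
      | exact ⟨a2, b1, c1, ⟨Or.inl ⟨rfl, rfl⟩, Or.inl ⟨rfl, rfl⟩⟩, rfl⟩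
      | exact ⟨a2, b2, c1, ⟨Or.inl ⟨rfl, rfl⟩, Or.inr ⟨rfl, rfl⟩⟩, rfl⟩
      | exact ⟨a1, b1, c1, ⟨Or.inr ⟨rfl, rfl⟩, Or.inl ⟨rfl, rfl⟩⟩, rfl⟩
      | exact ⟨a1, b2, c1, ⟨Or.inr ⟨rfl, rfl⟩, Or.inr ⟨rfl, rfl⟩⟩, rfl⟩)
end
end

section
/- Let ν ≥ 1, let f be a smooth function of (u_1,…,u_ν), let Ξ be a constant invertible symmetric ν×ν matrix with inverse Ξ^{ab}, and let g_f on ℝ^{ν+2} be given in the frame e_0 = ∂_x, e_a = ∂_{u_a}, e_{ν+1} = ∂_y by g_f(e_0,e_0) = f(u), g_f(e_0,e_{ν+1}) = 1, g_f(e_a,e_b) = Ξ_{ab}, all other products 0, with curvature components R_{ijkl}. Define the Ricci tensor ρ_{ij} := Σ_{k,l} g^{kl} R_{iklj}, where (g^{kl}) is the pointwise inverse of (g_{kl}). Then ρ_{ij} = 0 whenever (i,j) ≠ (0,0), ρ_{00} = −(1/2) Σ_{a,b} Ξ^{ab} ∂_{u_a} ∂_{u_b} f, and the Ricci operator ρ̂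 (the unique linear map of the tangent space with g_f(ρ̂ e_i, e_j) = ρ_{ij}) satisfies ρ̂² = 0 at every point. -/
noncomputable section

section AuxIndex
variable {ν : ℕ}

def uCL : (Fin (ν+2) → ℝ) →L[ℝ] (Fin ν → ℝ) :=
  ContinuousLinearMap.pi fun a => ContinuousLinearMap.proj (uidx a)

def lastI : Fin (ν + 2) := ⟨ν + 1, by omega⟩

lemma uidx_inj {a b : Fin ν} (h : uidx a = uidx b) : a = b := by
  have := congrArg Fin.val h
  simp [uidx] at this
  exact Fin.ext this

lemma uC_single_uidx (a : Fin ν) : uC (Pi.single (uidx a) (1:ℝ)) = Pi.single a 1 := by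
  funext b
  simp only [uC, Pi.single_apply]
  by_cases h : b = a
  · simp [h]
  · rw [if_neg (fun hh => h (uidx_inj hh)), if_neg h]

lemma uC_single_zero : uC (Pi.single (0 : Fin (ν+2)) (1:ℝ)) = 0 := by
  funext b
  simp only [uC, Pi.single_apply]
  rw [if_neg]
  · rfl
  · intro h
    have : (uidx b).1 = (0 : Fin (ν+2)).1 := by rw [h]
    simp [uidx] at this

lemma uC_single_last : uC (Pi.single (lastI : Fin (ν+2)) (1:ℝ)) = 0 := by
  funext b
  simp only [uC, Pi.single_apply]
  rw [if_neg]
  · rfl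
  · intro h
    have := congrArg Fin.val h
    simp [uidx, lastI] at this
    omega

lemma pd_comp_uC (g : (Fin ν → ℝ) → ℝ) (p : Fin (ν+2) → ℝ)
    (hg : DifferentiableAt ℝ g (uC p)) (i : Fin (ν+2)) :
    pd (fun q => g (uC q)) i p = fderiv ℝ g (uC p) (uC (Pi.single i 1)) := by
  unfold pd
  have h1 : (fun q : Fin (ν+2) → ℝ => g (uC q)) = g ∘ (uCL : (Fin (ν+2) → ℝ) →L[ℝ] _) := rfl
  have hg' : DifferentiableAt ℝ g (uCL p) := hg
  rw [h1, fderiv_comp p hg' uCL.differentiableAt, ContinuousLinearMap.fderiv]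
  rfl

lemma sum_decomp (h : Fin (ν+2) → ℝ) :
    ∑ i, h i = h 0 + (∑ a, h (uidx a)) + h lastI := by
  rw [Fin.sum_univ_succ, Fin.sum_univ_castSucc]
  have h1 : ∀ a : Fin ν, (a.castSucc).succ = uidx a := by
    intro a; apply Fin.ext; simp [uidx]
  have h2 : (Fin.last ν).succ = (lastI : Fin (ν+2)) := by
    apply Fin.ext; simp [lastI]
  simp only [h1, h2]
  ring

lemma trichotomy (i : Fin (ν+2)) : i = 0 ∨ (∃ a, i = uidx a) ∨ i = lastI := by
  by_cases h0 : i.1 = 0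
  · left; exact Fin.ext h0
  by_cases hl : i.1 = ν + 1
  · right; right; exact Fin.ext hl
  · right; left
    have hi := i.2
    exact ⟨⟨i.1 - 1, by omega⟩, Fin.ext (by simp [uidx]; omega)⟩

end AuxIndex

section AuxMet
variable {ν : ℕ}
variable (f : (Fin ν → ℝ) → ℝ) (Ξ : Matrix (Fin ν) (Fin ν) ℝ) (p : Fin (ν+2) → ℝ)

lemma gmet_00 : gmet f Ξ p 0 0 = f (uC p) := by simp [gmet]
lemma gmet_0l : gmet f Ξ p 0 lastI = 1 := by simp [gmet, lastI]
lemma gmet_l0 : gmet f Ξ p lastI 0 = 1 := by simp [gmet, lastI]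
lemma gmet_ll : gmet f Ξ p lastI lastI = 0 := by simp [gmet, lastI]
lemma gmet_uu (a b : Fin ν) : gmet f Ξ p (uidx a) (uidx b) = Ξ a b := by
  have ha := a.2; have hb := b.2
  unfold gmet uidx; dsimp only
  rw [if_neg (by simp), if_neg (by simp), dif_pos ⟨by omega, by omega, by omega, by omega⟩]
  congr 1
lemma gmet_u0 (a : Fin ν) : gmet f Ξ p (uidx a) 0 = 0 := by
  have ha := a.2
  unfold gmet uidx; dsimp only
  rw [if_neg (by simp), if_neg (by simp; omega), dif_neg (by simp)]
lemma gmet_0u (a : Fin ν) : gmet f Ξ p 0 (uidx a) = 0 := by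
  have ha := a.2
  unfold gmet uidx; dsimp only
  rw [if_neg (by simp), if_neg (by simp; omega), dif_neg (by simp)]
lemma gmet_ul (a : Fin ν) : gmet f Ξ p (uidx a) lastI = 0 := by
  have ha := a.2
  unfold gmet uidx lastI; dsimp only
  rw [if_neg (by simp), if_neg (by simp), dif_neg (by omega)]
lemma gmet_lu (a : Fin ν) : gmet f Ξ p lastI (uidx a) = 0 := by
  have ha := a.2
  unfold gmet uidx lastI; dsimp only
  rw [if_neg (by simp), if_neg (by simp), dif_neg (by omega)]
end AuxMet

section AuxFD
variable {ν : ℕ}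
variable (f : (Fin ν → ℝ) → ℝ)

/-- Derivative of `f ∘ uC` in the `i`-th direction, as a function of the point. -/
def FD (i : Fin (ν+2)) (q : Fin (ν+2) → ℝ) : ℝ :=
  fderiv ℝ f (uC q) (uC (Pi.single i 1))

variable (hf : ContDiff ℝ (⊤ : ℕ∞) f)
include hf

lemma fderiv_apply_diff (v : Fin ν → ℝ) :
    Differentiable ℝ (fun w => fderiv ℝ f w v) := by
  have h1 : Differentiable ℝ (fderiv ℝ f) :=
    (hf.fderiv_right (m := (⊤ : ℕ∞)) (by simp)).differentiable (by simp)
  exact h1.clm_apply (differentiable_const v)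

lemma FD_diff (i : Fin (ν+2)) : Differentiable ℝ (FD f i) := by
  have := (fderiv_apply_diff f hf (uC (Pi.single i 1))).comp
    (uCL (ν := ν)).differentiable
  exact this

lemma FD_uidx (a : Fin ν) (q : Fin (ν+2) → ℝ) : FD f (uidx a) q = pd f a (uC q) := by
  rw [FD, uC_single_uidx]; rfl

lemma FD_zero (q : Fin (ν+2) → ℝ) : FD f 0 q = 0 := by
  rw [FD, uC_single_zero]; simp

lemma FD_last (q : Fin (ν+2) → ℝ) : FD f lastI q = 0 := by
  rw [FD, uC_single_last]; simp

variable (p : Fin (ν+2) → ℝ)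

lemma pd_FD (i m : Fin (ν+2)) : pd (FD f i) m p
    = fderiv ℝ (fun w => fderiv ℝ f w (uC (Pi.single i 1))) (uC p) (uC (Pi.single m 1)) :=
  pd_comp_uC _ p ((fderiv_apply_diff f hf _).differentiableAt) m

lemma pd_FD_dir0 (i : Fin (ν+2)) : pd (FD f i) 0 p = 0 := by
  rw [pd_FD f hf, uC_single_zero]; simp

lemma pd_FD_dirlast (i : Fin (ν+2)) : pd (FD f i) lastI p = 0 := by
  rw [pd_FD f hf, uC_single_last]; simp

lemma pd_FD_uu (a b : Fin ν) :
    pd (FD f (uidx b)) (uidx a) p = pd (fun w => pd f b w) a (uC p) := by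
  rw [pd_FD f hf, uC_single_uidx, uC_single_uidx]; rfl

end AuxFD

section AuxGamma1
variable {ν : ℕ}
variable (f : (Fin ν → ℝ) → ℝ) (Ξ : Matrix (Fin ν) (Fin ν) ℝ)
variable (hf : ContDiff ℝ (⊤ : ℕ∞) f)
include hf

lemma pd_gmet (p : Fin (ν+2) → ℝ) (i j k : Fin (ν+2)) :
    pd (fun q => gmet f Ξ q i j) k p = if i.1 = 0 ∧ j.1 = 0 then FD f k p else 0 := by
  by_cases h : i.1 = 0 ∧ j.1 = 0
  · rw [if_pos h]
    have h2 : (fun q => gmet f Ξ q i j) = fun q => f (uC q) := by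
      funext q; simp only [gmet, if_pos h]
    rw [h2, pd_comp_uC f p ((hf.differentiable (by simp)).differentiableAt) k]
    rfl
  · rw [if_neg h]
    have h2 : (fun q => gmet f Ξ q i j) = fun _ => gmet f Ξ p i j := by
      funext q; simp only [gmet, if_neg h]
    rw [h2]
    simp [pd]

lemma Γ₁_eq (p : Fin (ν+2) → ℝ) (i j k : Fin (ν+2)) :
    Γ₁ f Ξ p i j k = (1/2) *
      ((if j.1 = 0 ∧ k.1 = 0 then (1:ℝ) else 0) * FD f i p
      + (if i.1 = 0 ∧ k.1 = 0 then (1:ℝ) else 0) * FD f j p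
      - (if i.1 = 0 ∧ j.1 = 0 then (1:ℝ) else 0) * FD f k p) := by
  rw [Γ₁, pd_gmet f Ξ hf, pd_gmet f Ξ hf, pd_gmet f Ξ hf]
  by_cases h1 : j.1 = 0 ∧ k.1 = 0 <;> by_cases h2 : i.1 = 0 ∧ k.1 = 0 <;>
    by_cases h3 : i.1 = 0 ∧ j.1 = 0 <;> simp [h1, h2, h3]

omit hf in
lemma pd_comb (c1 c2 c3 : ℝ) (A B C : (Fin (ν+2) → ℝ) → ℝ)
    (hA : Differentiable ℝ A) (hB : Differentiable ℝ B) (hC : Differentiable ℝ C)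
    (m : Fin (ν+2)) (p : Fin (ν+2) → ℝ) :
    pd (fun q => (1/2 : ℝ) * (c1 * A q + c2 * B q - c3 * C q)) m p
      = (1/2) * (c1 * pd A m p + c2 * pd B m p - c3 * pd C m p) := by
  have dA : DifferentiableAt ℝ A p := hA.differentiableAt
  have dB : DifferentiableAt ℝ B p := hB.differentiableAt
  have dC : DifferentiableAt ℝ C p := hC.differentiableAt
  unfold pd
  rw [fderiv_const_mul (((dA.const_mul c1).fun_add (dB.const_mul c2)).fun_sub (dC.const_mul c3)),
    fderiv_fun_sub ((dA.const_mul c1).fun_add (dB.const_mul c2)) (dC.const_mul c3),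
    fderiv_fun_add (dA.const_mul c1) (dB.const_mul c2),
    fderiv_const_mul dA, fderiv_const_mul dB, fderiv_const_mul dC]
  simp

lemma pd_Γ₁ (p : Fin (ν+2) → ℝ) (j k l m : Fin (ν+2)) :
    pd (fun q => Γ₁ f Ξ q j k l) m p = (1/2) *
      ((if k.1 = 0 ∧ l.1 = 0 then (1:ℝ) else 0) * pd (FD f j) m p
      + (if j.1 = 0 ∧ l.1 = 0 then (1:ℝ) else 0) * pd (FD f k) m p
      - (if j.1 = 0 ∧ k.1 = 0 then (1:ℝ) else 0) * pd (FD f l) m p) := by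
  have hfun : (fun q => Γ₁ f Ξ q j k l) = fun q => (1/2 : ℝ) *
      ((if k.1 = 0 ∧ l.1 = 0 then (1:ℝ) else 0) * FD f j q
      + (if j.1 = 0 ∧ l.1 = 0 then (1:ℝ) else 0) * FD f k q
      - (if j.1 = 0 ∧ k.1 = 0 then (1:ℝ) else 0) * FD f l q) := by
    funext q
    exact Γ₁_eq f Ξ hf q j k l
  rw [hfun, pd_comb _ _ _ _ _ _ (FD_diff f hf j) (FD_diff f hf k) (FD_diff f hf l)]

end AuxGamma1

section AuxInv
variable {ν : ℕ}
variable (f : (Fin ν → ℝ) → ℝ) (Ξ : Matrix (Fin ν) (Fin ν) ℝ) (p : Fin (ν+2) → ℝ)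

/-- The explicit inverse of the metric `g_f`. -/
def gv : Matrix (Fin (ν + 2)) (Fin (ν + 2)) ℝ := fun i j =>
  if i.1 = ν + 1 ∧ j.1 = ν + 1 then -(f (uC p))
  else if (i.1 = 0 ∧ j.1 = ν + 1) ∨ (i.1 = ν + 1 ∧ j.1 = 0) then 1
  else if h : 1 ≤ i.1 ∧ i.1 ≤ ν ∧ 1 ≤ j.1 ∧ j.1 ≤ ν then
    Ξ⁻¹ ⟨i.1 - 1, by omega⟩ ⟨j.1 - 1, by omega⟩
  else 0

lemma gv_00 : gv f Ξ p 0 0 = 0 := by simp [gv]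
lemma gv_0l : gv f Ξ p 0 lastI = 1 := by simp [gv, lastI]
lemma gv_l0 : gv f Ξ p lastI 0 = 1 := by simp [gv, lastI]
lemma gv_ll : gv f Ξ p lastI lastI = -(f (uC p)) := by simp [gv, lastI]
lemma gv_uu (a b : Fin ν) : gv f Ξ p (uidx a) (uidx b) = Ξ⁻¹ a b := by
  have ha := a.2; have hb := b.2
  unfold gv uidx; dsimp only
  rw [if_neg (by simp; omega), if_neg (by simp), dif_pos ⟨by omega, by omega, by omega, by omega⟩]
  congr 1
lemma gv_u0 (a : Fin ν) : gv f Ξ p (uidx a) 0 = 0 := by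
  have ha := a.2
  unfold gv uidx; dsimp only
  rw [if_neg (by simp), if_neg (by simp; omega), dif_neg (by simp)]
lemma gv_0u (a : Fin ν) : gv f Ξ p 0 (uidx a) = 0 := by
  have ha := a.2
  unfold gv uidx; dsimp only
  rw [if_neg (by simp), if_neg (by simp; omega), dif_neg (by simp)]
lemma gv_ul (a : Fin ν) : gv f Ξ p (uidx a) lastI = 0 := by
  have ha := a.2
  unfold gv uidx lastI; dsimp only
  rw [if_neg (by simp; omega), if_neg (by simp), dif_neg (by omega)]
lemma gv_lu (a : Fin ν) : gv f Ξ p lastI (uidx a) = 0 := by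
  have ha := a.2
  unfold gv uidx lastI; dsimp only
  rw [if_neg (by simp; omega), if_neg (by simp), dif_neg (by omega)]

lemma zero_ne_last : (0 : Fin (ν+2)) ≠ lastI := by
  intro h; have := congrArg Fin.val h; simp [lastI] at this
lemma uidx_ne_zero (a : Fin ν) : uidx a ≠ (0 : Fin (ν+2)) := by
  intro h; have := congrArg Fin.val h; simp [uidx] at this
lemma uidx_ne_last (a : Fin ν) : uidx a ≠ (lastI : Fin (ν+2)) := by
  have := a.2
  intro h; have h2 := congrArg Fin.val h; simp [uidx, lastI] at h2; omega

lemma gmet_mul_gv (hΞinv : IsUnit Ξ.det) : gmet f Ξ p * gv f Ξ p = 1 := by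
  have hXi : Ξ * Ξ⁻¹ = 1 := Matrix.mul_nonsing_inv _ hΞinv
  ext i j
  rw [Matrix.mul_apply, sum_decomp]
  rcases trichotomy i with hi | ⟨a, hi⟩ | hi <;>
    rcases trichotomy j with hj | ⟨b, hj⟩ | hj <;> subst hi <;> subst hj
  · simp [gmet_00, gmet_0u, gmet_0l, gv_00, gv_u0, gv_l0, Matrix.one_apply]
  · simp [gmet_00, gmet_0u, gmet_0l, gv_0u, gv_uu, gv_lu, Matrix.one_apply,
      (uidx_ne_zero b).symm]
  · simp [gmet_00, gmet_0u, gmet_0l, gv_0l, gv_ul, gv_ll, Matrix.one_apply, zero_ne_last]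
  · simp [gmet_u0, gmet_uu, gmet_ul, gv_00, gv_u0, gv_l0, Matrix.one_apply, uidx_ne_zero]
  · have : ∑ c, gmet f Ξ p (uidx a) (uidx c) * gv f Ξ p (uidx c) (uidx b)
        = ∑ c, Ξ a c * Ξ⁻¹ c b := by
      apply Finset.sum_congr rfl; intro c _; rw [gmet_uu, gv_uu]
    simp only [gmet_u0, gmet_uu, gmet_ul, gv_0u, gv_uu, gv_lu, this]
    rw [← Matrix.mul_apply, hXi]
    by_cases hab : a = b
    · subst hab; simp [Matrix.one_apply]
    · rw [Matrix.one_apply_ne hab, Matrix.one_apply_ne (fun h => hab (uidx_inj h))]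
      simp
  · simp [gmet_u0, gmet_uu, gmet_ul, gv_0l, gv_ul, gv_ll, Matrix.one_apply, uidx_ne_last]
  · simp [gmet_l0, gmet_lu, gmet_ll, gv_00, gv_u0, gv_l0, Matrix.one_apply, zero_ne_last.symm]
  · simp [gmet_l0, gmet_lu, gmet_ll, gv_0u, gv_uu, gv_lu, Matrix.one_apply,
      (uidx_ne_last b).symm]
  · simp [gmet_l0, gmet_lu, gmet_ll, gv_0l, gv_ul, gv_ll, Matrix.one_apply]

lemma ginv_eq (hΞinv : IsUnit Ξ.det) : (gmet f Ξ p)⁻¹ = gv f Ξ p :=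
  Matrix.inv_eq_right_inv (gmet_mul_gv f Ξ p hΞinv)

lemma gv_mul_gmet (hΞinv : IsUnit Ξ.det) : gv f Ξ p * gmet f Ξ p = 1 :=
  mul_eq_one_comm.mp (gmet_mul_gv f Ξ p hΞinv)

end AuxInv

section AuxGamma2
variable {ν : ℕ}
variable (f : (Fin ν → ℝ) → ℝ) (Ξ : Matrix (Fin ν) (Fin ν) ℝ) (p : Fin (ν+2) → ℝ)

lemma uidx_val (a : Fin ν) : (uidx a).1 = a.1 + 1 := rfl
lemma lastI_val : (lastI : Fin (ν+2)).1 = ν + 1 := rfl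

variable (hf : ContDiff ℝ (⊤ : ℕ∞) f)
include hf

lemma Γ₁_mid_last (i l : Fin (ν+2)) : Γ₁ f Ξ p i lastI l = 0 := by
  rw [Γ₁_eq f Ξ hf, FD_last f hf]
  simp [lastI_val]

lemma Γ₁_third_last (j k : Fin (ν+2)) : Γ₁ f Ξ p j k lastI = 0 := by
  rw [Γ₁_eq f Ξ hf, FD_last f hf]
  simp [lastI_val]

lemma Γ₁_mid_u (i l : Fin (ν+2)) (c : Fin ν) : Γ₁ f Ξ p i (uidx c) l
    = (if i.1 = 0 ∧ l.1 = 0 then (1:ℝ) else 0) * ((1/2) * FD f (uidx c) p) := by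
  rw [Γ₁_eq f Ξ hf]
  simp only [uidx_val]
  by_cases h : i.1 = 0 ∧ l.1 = 0 <;> simp [h]

lemma Γ₁_third_u (j k : Fin (ν+2)) (d : Fin ν) : Γ₁ f Ξ p j k (uidx d)
    = (if j.1 = 0 ∧ k.1 = 0 then (1:ℝ) else 0) * (-(1/2) * FD f (uidx d) p) := by
  rw [Γ₁_eq f Ξ hf]
  simp only [uidx_val]
  by_cases h : j.1 = 0 ∧ k.1 = 0 <;> simp [h]

variable (hΞinv : IsUnit Ξ.det)
include hΞinv

lemma Γ₂_zero (j k : Fin (ν+2)) : Γ₂ f Ξ p j k 0 = 0 := by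
  rw [Γ₂, ginv_eq f Ξ p hΞinv, sum_decomp]
  simp only [gv_00, gv_0u, gv_0l, zero_mul, one_mul, Finset.sum_const_zero,
    Γ₁_third_last f Ξ p hf]
  ring

lemma Γ₂_u (j k : Fin (ν+2)) (c : Fin ν) : Γ₂ f Ξ p j k (uidx c)
    = (if j.1 = 0 ∧ k.1 = 0 then (1:ℝ) else 0)
      * (-(1/2) * ∑ d, Ξ⁻¹ c d * FD f (uidx d) p) := by
  rw [Γ₂, ginv_eq f Ξ p hΞinv, sum_decomp]
  simp only [gv_u0, gv_uu, gv_ul, zero_mul, add_zero, zero_add]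
  have h1 : ∀ d : Fin ν, Ξ⁻¹ c d * Γ₁ f Ξ p j k (uidx d)
      = (if j.1 = 0 ∧ k.1 = 0 then (1:ℝ) else 0)
        * (-(1/2) * (Ξ⁻¹ c d * FD f (uidx d) p)) := by
    intro d
    rw [Γ₁_third_u f Ξ p hf]
    ring
  rw [Finset.sum_congr rfl (fun d _ => h1 d), ← Finset.mul_sum, ← Finset.mul_sum]

lemma quad_zero (i j k l : Fin (ν+2)) :
    ∑ n, (Γ₁ f Ξ p i n l * Γ₂ f Ξ p j k n - Γ₁ f Ξ p j n l * Γ₂ f Ξ p i k n) = 0 := by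
  apply Finset.sum_eq_zero
  intro n _
  rcases trichotomy n with hn | ⟨c, hn⟩ | hn <;> subst hn
  · rw [Γ₂_zero f Ξ p hf hΞinv, Γ₂_zero f Ξ p hf hΞinv]; ring
  · rw [Γ₁_mid_u f Ξ p hf, Γ₁_mid_u f Ξ p hf, Γ₂_u f Ξ p hf hΞinv, Γ₂_u f Ξ p hf hΞinv]
    by_cases h1 : i.1 = 0 <;> by_cases h2 : j.1 = 0 <;> by_cases h3 : k.1 = 0 <;>
      by_cases h4 : l.1 = 0 <;> simp [h1, h2, h3, h4]
  · rw [Γ₁_mid_last f Ξ p hf, Γ₁_mid_last f Ξ p hf]; ring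

end AuxGamma2

section AuxRc
variable {ν : ℕ}
variable (f : (Fin ν → ℝ) → ℝ) (Ξ : Matrix (Fin ν) (Fin ν) ℝ) (p : Fin (ν+2) → ℝ)
variable (hf : ContDiff ℝ (⊤ : ℕ∞) f)
include hf

lemma pd_FD_src0 (m : Fin (ν+2)) : pd (FD f 0) m p = 0 := by
  have h : FD f (0 : Fin (ν+2)) = fun _ => (0:ℝ) := funext (fun q => FD_zero f hf q)
  rw [h]
  simp [pd]

lemma pd_FD_srclast (m : Fin (ν+2)) : pd (FD f lastI) m p = 0 := by
  have h : FD f (lastI : Fin (ν+2)) = fun _ => (0:ℝ) := funext (fun q => FD_last f hf q)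
  rw [h]
  simp [pd]

variable (hΞinv : IsUnit Ξ.det)
include hΞinv

lemma Rc_u (i j : Fin (ν+2)) (a b : Fin ν) : Rc f Ξ p i (uidx a) (uidx b) j
    = -((1/2) * ((if i.1 = 0 ∧ j.1 = 0 then (1:ℝ) else 0)
        * pd (fun w => pd f b w) a (uC p))) := by
  rw [Rc, quad_zero f Ξ p hf hΞinv, add_zero, pd_Γ₁ f Ξ hf, pd_Γ₁ f Ξ hf,
    pd_FD_uu f hf p a b]
  simp only [uidx_val, Nat.succ_ne_zero, false_and, and_false, if_false, zero_mul]
  ring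

lemma Rc_0l (i j : Fin (ν+2)) : Rc f Ξ p i 0 lastI j = 0 := by
  rw [Rc, quad_zero f Ξ p hf hΞinv, add_zero, pd_Γ₁ f Ξ hf, pd_Γ₁ f Ξ hf]
  simp only [pd_FD_srclast f p hf, pd_FD_src0 f p hf, pd_FD_dirlast f hf, pd_FD_dir0 f hf,
    lastI_val, Nat.succ_ne_zero, false_and, and_false, if_false, zero_mul, mul_zero]
  ring

lemma Rc_l0 (i j : Fin (ν+2)) : Rc f Ξ p i lastI 0 j = 0 := by
  rw [Rc, quad_zero f Ξ p hf hΞinv, add_zero, pd_Γ₁ f Ξ hf, pd_Γ₁ f Ξ hf]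
  simp only [pd_FD_srclast f p hf, pd_FD_src0 f p hf, pd_FD_dirlast f hf, pd_FD_dir0 f hf,
    lastI_val, Nat.succ_ne_zero, false_and, and_false, if_false, zero_mul, mul_zero]
  ring

lemma Rc_ll (i j : Fin (ν+2)) : Rc f Ξ p i lastI lastI j = 0 := by
  rw [Rc, quad_zero f Ξ p hf hΞinv, add_zero, pd_Γ₁ f Ξ hf, pd_Γ₁ f Ξ hf]
  simp only [pd_FD_srclast f p hf, pd_FD_src0 f p hf, pd_FD_dirlast f hf, pd_FD_dir0 f hf,
    lastI_val, Nat.succ_ne_zero, false_and, and_false, if_false, zero_mul, mul_zero]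
  ring

end AuxRc

/-- The Ricci tensor `ρ_{ij} = Σ_{kl} g^{kl} R_{iklj}` of the metric `g_f`. -/
def Ric {ν : ℕ} (f : (Fin ν → ℝ) → ℝ) (Ξ : Matrix (Fin ν) (Fin ν) ℝ)
    (p : Fin (ν + 2) → ℝ) (i j : Fin (ν + 2)) : ℝ :=
  ∑ k, ∑ l, (gmet f Ξ p)⁻¹ k l * Rc f Ξ p i k l j

section AuxRic
variable {ν : ℕ}
variable (f : (Fin ν → ℝ) → ℝ) (Ξ : Matrix (Fin ν) (Fin ν) ℝ) (p : Fin (ν+2) → ℝ)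
variable (hf : ContDiff ℝ (⊤ : ℕ∞) f) (hΞinv : IsUnit Ξ.det)
include hf hΞinv

lemma Ric_eq (i j : Fin (ν+2)) : Ric f Ξ p i j
    = (if i.1 = 0 ∧ j.1 = 0 then (1:ℝ) else 0)
      * -((1/2) * ∑ a, ∑ b, Ξ⁻¹ a b * pd (fun w => pd f b w) a (uC p)) := by
  rw [Ric]
  simp only [ginv_eq f Ξ p hΞinv]
  rw [sum_decomp]
  have h0 : ∑ l, gv f Ξ p 0 l * Rc f Ξ p i 0 l j = 0 := by
    rw [sum_decomp]
    simp [gv_00, gv_0u, gv_0l, Rc_0l f Ξ p hf hΞinv]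
  have hl : ∑ l, gv f Ξ p lastI l * Rc f Ξ p i lastI l j = 0 := by
    rw [sum_decomp]
    simp [gv_l0, gv_lu, gv_ll, Rc_l0 f Ξ p hf hΞinv, Rc_ll f Ξ p hf hΞinv]
  have hu : ∀ a : Fin ν, ∑ l, gv f Ξ p (uidx a) l * Rc f Ξ p i (uidx a) l j
      = ∑ b, Ξ⁻¹ a b * -((1/2) * ((if i.1 = 0 ∧ j.1 = 0 then (1:ℝ) else 0)
          * pd (fun w => pd f b w) a (uC p))) := by
    intro a
    rw [sum_decomp]
    simp only [gv_u0, gv_uu, gv_ul, zero_mul, add_zero, zero_add, Rc_u f Ξ p hf hΞinv]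
  simp only [h0, hl, hu, zero_add, add_zero]
  by_cases h : i.1 = 0 ∧ j.1 = 0
  · simp only [if_pos h, one_mul]
    rw [Finset.mul_sum, ← Finset.sum_neg_distrib]
    apply Finset.sum_congr rfl
    intro a _
    rw [Finset.mul_sum, ← Finset.sum_neg_distrib]
    apply Finset.sum_congr rfl
    intro b _
    ring
  · rw [if_neg h]; simp

lemma gv_row0 (j : Fin (ν+2)) : gv f Ξ p 0 j = (Pi.single lastI 1 : Fin (ν+2) → ℝ) j := by
  rcases trichotomy j with hj | ⟨b, hj⟩ | hj <;> subst hj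
  · rw [gv_00, Pi.single_apply, if_neg zero_ne_last]
  · rw [gv_0u, Pi.single_apply, if_neg (uidx_ne_last b)]
  · rw [gv_0l, Pi.single_apply, if_pos rfl]

end AuxRic

/-- the Ricci tensor of `g_f` vanishes except for
`ρ_{00} = -(1/2) Σ_{ab} Ξ^{ab} ∂_{u_a} ∂_{u_b} f`, and the Ricci operator `ρ̂`
(characterized by `g(ρ̂ e_i, e_j) = ρ_{ij}`) squares to zero at every point. -/
theorem ricci_tensor_and_operator (ν : ℕ) (hν : 1 ≤ ν)
    (f : (Fin ν → ℝ) → ℝ) (hf : ContDiff ℝ (⊤ : ℕ∞) f)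
    (Ξ : Matrix (Fin ν) (Fin ν) ℝ) (hΞsym : Ξ.IsSymm) (hΞinv : IsUnit Ξ.det) :
    ∀ p : Fin (ν + 2) → ℝ,
      (∀ i j : Fin (ν + 2), (i, j) ≠ (0, 0) → Ric f Ξ p i j = 0) ∧
      (Ric f Ξ p 0 0 = -((1 / 2) * ∑ a, ∑ b, Ξ⁻¹ a b * pd (fun w => pd f b w) a (uC p))) ∧
      (∀ ρhat : (Fin (ν + 2) → ℝ) →ₗ[ℝ] (Fin (ν + 2) → ℝ),
        (∀ i j : Fin (ν + 2),
          (∑ k, ρhat (Pi.single i (1 : ℝ)) k * gmet f Ξ p k j) = Ric f Ξ p i j) →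
        ρhat ∘ₗ ρhat = 0) := by
  intro p
  have hval0 : (0 : Fin (ν+2)).1 = 0 := rfl
  refine ⟨?_, ?_, ?_⟩
  · intro i j hij
    rw [Ric_eq f Ξ p hf hΞinv]
    by_cases h : i.1 = 0 ∧ j.1 = 0
    · exact absurd (by rw [show i = 0 from Fin.ext h.1, show j = 0 from Fin.ext h.2]) hij
    · rw [if_neg h, zero_mul]
  · rw [Ric_eq f Ξ p hf hΞinv, if_pos ⟨rfl, rfl⟩, one_mul]
  · intro ρhat hρ
    have hv : ∀ i, ρhat (Pi.single i 1)
        = Matrix.vecMul (fun k => Ric f Ξ p i k) (gv f Ξ p) := by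
      intro i
      have h1 : Matrix.vecMul (ρhat (Pi.single i 1)) (gmet f Ξ p)
          = fun k => Ric f Ξ p i k := by
        funext j
        simp only [Matrix.vecMul, dotProduct]
        exact hρ i j
      calc ρhat (Pi.single i 1) = Matrix.vecMul (ρhat (Pi.single i 1)) 1 :=
            (Matrix.vecMul_one _).symm
        _ = Matrix.vecMul (ρhat (Pi.single i 1)) (gmet f Ξ p * gv f Ξ p) := by
            rw [gmet_mul_gv f Ξ p hΞinv]
        _ = Matrix.vecMul (Matrix.vecMul (ρhat (Pi.single i 1)) (gmet f Ξ p)) (gv f Ξ p) := by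
            rw [Matrix.vecMul_vecMul]
        _ = Matrix.vecMul (fun k => Ric f Ξ p i k) (gv f Ξ p) := by rw [h1]
    have hz : ∀ i : Fin (ν+2), i.1 ≠ 0 → ρhat (Pi.single i 1) = 0 := by
      intro i hi
      rw [hv i]
      funext j
      simp [Matrix.vecMul, dotProduct, Ric_eq f Ξ p hf hΞinv, hi]
    have h0 : ρhat (Pi.single (0 : Fin (ν+2)) 1)
        = Ric f Ξ p 0 0 • (Pi.single lastI 1 : Fin (ν+2) → ℝ) := by
      rw [hv 0]
      funext j
      simp only [Matrix.vecMul, dotProduct, Pi.smul_apply, smul_eq_mul]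
      rw [sum_decomp]
      have hu : ∀ a : Fin ν, Ric f Ξ p 0 (uidx a) = 0 := by
        intro a
        rw [Ric_eq f Ξ p hf hΞinv, if_neg (by simp [uidx_val]), zero_mul]
      have hlst : Ric f Ξ p 0 lastI = 0 := by
        rw [Ric_eq f Ξ p hf hΞinv, if_neg (by simp [lastI_val]), zero_mul]
      rw [hlst]
      simp only [hu, zero_mul, Finset.sum_const_zero, add_zero]
      rw [gv_row0 f Ξ p hf hΞinv]
    have hsq : ∀ i : Fin (ν+2), ρhat (ρhat (Pi.single i 1)) = 0 := by
      intro i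
      by_cases hi : i.1 = 0
      · rw [show i = 0 from Fin.ext hi, h0, map_smul,
          hz lastI (Nat.succ_ne_zero ν), smul_zero]
      · rw [hz i hi, map_zero]
    apply LinearMap.ext
    intro w
    rw [LinearMap.comp_apply, LinearMap.zero_apply]
    conv_lhs => rw [show w = ∑ i, Pi.single i (w i) from (Finset.univ_sum_single w).symm]
    rw [map_sum, map_sum]
    apply Finset.sum_eq_zero
    intro i _
    have hsm : Pi.single i (w i) = w i • (Pi.single i 1 : Fin (ν+2) → ℝ) := by
      rw [← Pi.single_smul, smul_eq_mul, mul_one]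
    rw [hsm, map_smul, map_smul, hsq i, smul_zero]
end
end

section
/- Let ν ≥ 1, let c_{abc} (1 ≤ a,b,c ≤ ν) be real constants totally symmetric in (a,b,c), let f(u) := −(1/3) Σ_{a,b,c} c_{abc} u_a u_b u_c, and let Ξ be a constant invertible symmetric ν×ν matrix. Let ∇R be the 5-tensor on ℝ^{ν+2} whose components are R_{ijkl;n}, the covariant derivative curvature components of the metric g_f (these are constant on the coordinate frame since f is cubic). Define L(e_i,e_j) := δ_{0i} δ_{0j} and S(e_i,e_j,e_k) := −(1/2) ∂_i ∂_j ∂_k f. Then ∇R = ∇R_{L,S}, where ∇R_{L,S}(x_1,x_2,x_3,x_4;x_5) := S(x_1,x_4,x_5) L(x_2,x_3) + L(x_1,x_4) S(x_2,x_3,x_5) − S(x_1,x_3,x_5) L(x_2,x_4) − L(x_1,x_3) S(x_2,x_4,x_5). -/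
noncomputable section

/-!
Only `g₀₀ = F := f ∘ u` varies, so every Christoffel symbol is built from `dF` and the covector
`dx` (`dx i = δ₀ᵢ`). Since `∂_y F = 0` and `g⁻¹` exchanges the `x`- and `y`-slots, the quadratic
terms of the curvature cancel and `R = KN(-½ Hess F, dx ⊗ dx)`, a Kulkarni–Nomizu product.
In `∇_n R` the connection terms act as a derivation on both factors of this product: it kills
`dx ⊗ dx` (as `Γ_{n i}{}^0 = 0`) and maps `Hess F` to some `dx ⊗ Y + Y ⊗ dx`, whose product with
`dx ⊗ dx` vanishes. Hence `∇_n R = KN(-½ ∂_n Hess F, dx ⊗ dx)`, which is `∇R_{L,S}` by the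
symmetry of third derivatives.
-/

section PartialDerivative

variable {n : ℕ} {g h : (Fin n → ℝ) → ℝ} {p : Fin n → ℝ}

lemma pd_add (hg : DifferentiableAt ℝ g p) (hh : DifferentiableAt ℝ h p) (i : Fin n) :
    pd (fun q => g q + h q) i p = pd g i p + pd h i p := by
  simp [pd, fderiv_fun_add hg hh]

lemma pd_sub (hg : DifferentiableAt ℝ g p) (hh : DifferentiableAt ℝ h p) (i : Fin n) :
    pd (fun q => g q - h q) i p = pd g i p - pd h i p := by
  simp [pd, fderiv_fun_sub hg hh]

lemma pd_const_mul (hg : DifferentiableAt ℝ g p) (c : ℝ) (i : Fin n) :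
    pd (fun q => c * g q) i p = c * pd g i p := by
  simp [pd, fderiv_const_mul hg]

lemma pd_mul_const (hg : DifferentiableAt ℝ g p) (c : ℝ) (i : Fin n) :
    pd (fun q => g q * c) i p = pd g i p * c := by
  rw [pd, fderiv_mul_const hg]
  exact mul_comm _ _

lemma pd_const (c : ℝ) (i : Fin n) : pd (fun _ => c) i p = 0 := by
  simp [pd]

lemma contDiff_pd {k : WithTop ℕ∞} (hg : ContDiff ℝ (k + 1) g) (i : Fin n) :
    ContDiff ℝ k (pd g i) :=
  (hg.fderiv_right le_rfl).clm_apply contDiff_const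

lemma differentiable_pd_pd (hg : ContDiff ℝ 3 g) (i j : Fin n) :
    Differentiable ℝ (pd (pd g j) i) :=
  (contDiff_pd (k := 1) (contDiff_pd (k := 2) hg j) i).differentiable one_ne_zero

lemma pd_pd_comm (hg : ContDiff ℝ 2 g) (i j : Fin n) : pd (pd g j) i = pd (pd g i) j := by
  funext p
  have hd : Differentiable ℝ (fderiv ℝ g) :=
    (hg.fderiv_right (m := 1) le_rfl).differentiable one_ne_zero
  have hsnd : ∀ v w : Fin n → ℝ,
      fderiv ℝ (fun q => fderiv ℝ g q w) p v = fderiv ℝ (fderiv ℝ g) p v w := fun v w => by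
    rw [fderiv_clm_apply (hd p) (differentiableAt_const w)]
    simp
  change fderiv ℝ (fun q => fderiv ℝ g q _) p _ = fderiv ℝ (fun q => fderiv ℝ g q _) p _
  rw [hsnd, hsnd]
  exact hg.contDiffAt.isSymmSndFDerivAt (by simp) _ _

lemma pd_pd_pd_rotate (hg : ContDiff ℝ 3 g) (a b c : Fin n) :
    pd (pd (pd g a) b) c = pd (pd (pd g c) a) b := by
  rw [pd_pd_comm (contDiff_pd (k := 2) hg a), pd_pd_comm (hg.of_le (by norm_num)) a c]

end PartialDerivative

section KulkarniNomizu

open Matrix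

variable {ι : Type*}

def kulkarniNomizu (A B : Matrix ι ι ℝ) (i j k l : ι) : ℝ :=
  A i l * B j k + B i l * A j k - A i k * B j l - B i k * A j l

lemma kulkarniNomizu_zero_right (A : Matrix ι ι ℝ) (i j k l : ι) :
    kulkarniNomizu A 0 i j k l = 0 := by
  simp [kulkarniNomizu]

lemma kulkarniNomizu_symm_vecMulVec (x y : ι → ℝ) (i j k l : ι) :
    kulkarniNomizu (vecMulVec x y + vecMulVec y x) (vecMulVec x x) i j k l = 0 := by
  simp only [kulkarniNomizu, Matrix.add_apply, vecMulVec_apply]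
  ring

/-- Leibniz rule: `G` acts on 2-tensors by `A ↦ G * A + A * Gᵀ` and on 4-tensors slot by slot. -/
lemma sum_mul_kulkarniNomizu [Fintype ι] (G A B : Matrix ι ι ℝ) (i j k l : ι) :
    ∑ m, (G i m * kulkarniNomizu A B m j k l + G j m * kulkarniNomizu A B i m k l
      + G k m * kulkarniNomizu A B i j m l + G l m * kulkarniNomizu A B i j k m)
    = kulkarniNomizu (G * A + A * Gᵀ) B i j k l + kulkarniNomizu A (G * B + B * Gᵀ) i j k l := by
  simp only [kulkarniNomizu, Matrix.add_apply, mul_apply, transpose_apply,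
    ← Finset.sum_add_distrib, Finset.sum_mul, Finset.mul_sum, ← Finset.sum_sub_distrib]
  exact Finset.sum_congr rfl fun m _ => by ring

lemma pd_kulkarniNomizu {n : ℕ} {A : (Fin n → ℝ) → Matrix ι ι ℝ} {p : Fin n → ℝ}
    (hA : ∀ a b, DifferentiableAt ℝ (fun q => A q a b) p) (B : Matrix ι ι ℝ) (m : Fin n)
    (i j k l : ι) :
    pd (fun q => kulkarniNomizu (A q) B i j k l) m p
      = kulkarniNomizu (of fun a b => pd (fun q => A q a b) m p) B i j k l := by
  simp (disch := fun_prop) only [kulkarniNomizu, pd_add, pd_sub, pd_mul_const, pd_const_mul,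
    of_apply]

end KulkarniNomizu

namespace Matrix

variable {n R : Type*} [Fintype n] [DecidableEq n] [CommRing R]

lemma inv_apply_eq_zero_of_col_eq_single (M : Matrix n n R) {r c k : n}
    (hM : ∀ m, M m c = if m = r then 1 else 0) (hk : k ≠ c) : M⁻¹ k r = 0 := by
  by_cases h : IsUnit M.det
  · have := congrFun (congrFun (M.nonsing_inv_mul h) k) c
    simpa [mul_apply, hM, one_apply_ne hk] using this
  · simp [M.nonsing_inv_apply_not_isUnit h]

lemma inv_apply_eq_zero_of_row_eq_single (M : Matrix n n R) {r c k : n}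
    (hM : ∀ m, M r m = if m = c then 1 else 0) (hk : k ≠ r) : M⁻¹ c k = 0 := by
  by_cases h : IsUnit M.det
  · have := congrFun (congrFun (M.mul_nonsing_inv h) r) k
    simpa [mul_apply, hM, one_apply_ne hk.symm] using this
  · simp [M.nonsing_inv_apply_not_isUnit h]

end Matrix

namespace MetricGf

open Matrix

variable {ν : ℕ} {f : (Fin ν → ℝ) → ℝ} {Ξ : Matrix (Fin ν) (Fin ν) ℝ}

def dx (i : Fin (ν + 2)) : ℝ := if i = 0 then 1 else 0

def fLift (f : (Fin ν → ℝ) → ℝ) (w : Fin (ν + 2) → ℝ) : ℝ := f (uC w)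

lemma dx_last : dx (Fin.last (ν + 1)) = 0 := by
  simp [dx, Fin.ext_iff]

lemma sum_mul_dx (v : Fin (ν + 2) → ℝ) : ∑ l, v l * dx l = v 0 := by
  simp [dx]

lemma contDiff_fLift {k : WithTop ℕ∞} (hf : ContDiff ℝ k f) : ContDiff ℝ k (fLift f) :=
  hf.comp (contDiff_pi.2 fun a => contDiff_apply ℝ ℝ (uidx a))

lemma pd_fLift_last (hf : Differentiable ℝ f) : pd (fLift f) (Fin.last (ν + 1)) = 0 := by
  funext q
  have huC : HasFDerivAt (fun w : Fin (ν + 2) → ℝ => fun a => w (uidx a))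
      (ContinuousLinearMap.pi fun a => ContinuousLinearMap.proj (uidx a)) q :=
    hasFDerivAt_pi.2 fun a => hasFDerivAt_apply (𝕜 := ℝ) (uidx a) q
  have hF : HasFDerivAt (fLift f) ((fderiv ℝ f (uC q)).comp
      (ContinuousLinearMap.pi fun a => ContinuousLinearMap.proj (uidx a))) q :=
    (hf _).hasFDerivAt.comp q huC
  have huidx : ∀ a : Fin ν, uidx a ≠ Fin.last (ν + 1) := fun a => by
    simp [uidx, Fin.ext_iff, a.isLt.ne]
  have hsingle : (fun a => Pi.single (M := fun _ => ℝ) (Fin.last (ν + 1)) 1 (uidx a)) = 0 :=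
    funext fun a => by simp [huidx]
  rw [pd, hF.fderiv]
  simp [hsingle]

lemma gmet_apply_last (p : Fin (ν + 2) → ℝ) (m : Fin (ν + 2)) :
    gmet f Ξ p m (Fin.last (ν + 1)) = if m = 0 then 1 else 0 := by
  have hl : (Fin.last (ν + 1)).1 = ν + 1 := rfl
  rcases eq_or_ne m 0 with rfl | hm
  · rw [gmet, if_neg (by omega), if_pos (Or.inl ⟨rfl, rfl⟩), if_pos rfl]
  · have hm' : m.1 ≠ 0 := fun h => hm (Fin.ext h)
    rw [gmet, if_neg (by omega), if_neg (by omega), dif_neg (by omega), if_neg hm]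

lemma gmet_last_apply (p : Fin (ν + 2) → ℝ) (m : Fin (ν + 2)) :
    gmet f Ξ p (Fin.last (ν + 1)) m = if m = 0 then 1 else 0 := by
  have hl : (Fin.last (ν + 1)).1 = ν + 1 := rfl
  rcases eq_or_ne m 0 with rfl | hm
  · rw [gmet, if_neg (by omega), if_pos (Or.inr ⟨rfl, rfl⟩), if_pos rfl]
  · have hm' : m.1 ≠ 0 := fun h => hm (Fin.ext h)
    rw [gmet, if_neg (by omega), if_neg (by omega), dif_neg (by omega), if_neg hm]

lemma inv_gmet_apply_zero (p : Fin (ν + 2) → ℝ) {k : Fin (ν + 2)}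
    (hk : k ≠ Fin.last (ν + 1)) : (gmet f Ξ p)⁻¹ k 0 = 0 :=
  inv_apply_eq_zero_of_col_eq_single _ (gmet_apply_last p) hk

lemma inv_gmet_zero_apply (p : Fin (ν + 2) → ℝ) {k : Fin (ν + 2)}
    (hk : k ≠ Fin.last (ν + 1)) : (gmet f Ξ p)⁻¹ 0 k = 0 :=
  inv_apply_eq_zero_of_row_eq_single _ (gmet_last_apply p) hk

lemma pd_gmet (p : Fin (ν + 2) → ℝ) (i j k : Fin (ν + 2)) :
    pd (fun q => gmet f Ξ q j k) i p = dx j * dx k * pd (fLift f) i p := by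
  by_cases h : j = 0 ∧ k = 0
  · obtain ⟨rfl, rfl⟩ := h
    have hg : (fun q => gmet f Ξ q 0 0) = fLift f := funext fun q => by
      rw [gmet, if_pos ⟨rfl, rfl⟩]
      rfl
    simp [hg, dx]
  · have h' : ¬(j.1 = 0 ∧ k.1 = 0) := fun h'' => h ⟨Fin.ext h''.1, Fin.ext h''.2⟩
    have hg : (fun q => gmet f Ξ q j k) = fun _ => gmet f Ξ p j k := funext fun q => by
      rw [gmet, gmet, if_neg h', if_neg h']
    rw [hg, pd_const]
    by_cases hj : j = 0 <;> simp_all [dx]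

lemma Γ₁_eq (p : Fin (ν + 2) → ℝ) (i j k : Fin (ν + 2)) :
    Γ₁ f Ξ p i j k = 1 / 2 * (dx j * dx k * pd (fLift f) i p + dx i * dx k * pd (fLift f) j p
      - dx i * dx j * pd (fLift f) k p) := by
  simp only [Γ₁, pd_gmet]

def grad (f : (Fin ν → ℝ) → ℝ) (Ξ : Matrix (Fin ν) (Fin ν) ℝ) (p : Fin (ν + 2) → ℝ)
    (k : Fin (ν + 2)) : ℝ :=
  ∑ l, (gmet f Ξ p)⁻¹ k l * pd (fLift f) l p

lemma grad_zero (hf : Differentiable ℝ f) (p : Fin (ν + 2) → ℝ) : grad f Ξ p 0 = 0 := by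
  refine Finset.sum_eq_zero fun l _ => ?_
  rcases eq_or_ne l (Fin.last (ν + 1)) with rfl | hl
  · simp [pd_fLift_last hf]
  · simp [inv_gmet_zero_apply p hl]

lemma dx_mul_grad (hf : Differentiable ℝ f) (p : Fin (ν + 2) → ℝ) (m : Fin (ν + 2)) :
    dx m * grad f Ξ p m = 0 := by
  rcases eq_or_ne m 0 with rfl | hm
  · simp [grad_zero hf]
  · simp [dx, hm]

lemma Γ₂_eq (p : Fin (ν + 2) → ℝ) (i j k : Fin (ν + 2)) :
    Γ₂ f Ξ p i j k = 1 / 2 * (gmet f Ξ p)⁻¹ k 0 * (dx j * pd (fLift f) i p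
      + dx i * pd (fLift f) j p) - 1 / 2 * dx i * dx j * grad f Ξ p k := by
  have hterm : ∀ l, (gmet f Ξ p)⁻¹ k l * Γ₁ f Ξ p i j l
      = 1 / 2 * (dx j * pd (fLift f) i p + dx i * pd (fLift f) j p) * ((gmet f Ξ p)⁻¹ k l * dx l)
        - 1 / 2 * dx i * dx j * ((gmet f Ξ p)⁻¹ k l * pd (fLift f) l p) := fun l => by
    rw [Γ₁_eq]
    ring
  rw [Γ₂, Finset.sum_congr rfl fun l _ => hterm l, Finset.sum_sub_distrib, ← Finset.mul_sum,
    ← Finset.mul_sum, sum_mul_dx, grad]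
  ring

lemma Γ₂_zero_right (hf : Differentiable ℝ f) (p : Fin (ν + 2) → ℝ) (i j : Fin (ν + 2)) :
    Γ₂ f Ξ p i j 0 = 0 := by
  rw [Γ₂_eq, inv_gmet_zero_apply p Fin.last_pos'.ne, grad_zero hf]
  ring

lemma sum_Γ₂_mul (p : Fin (ν + 2) → ℝ) (i j : Fin (ν + 2)) {T : Fin (ν + 2) → ℝ}
    (hT : T (Fin.last (ν + 1)) = 0) :
    ∑ m, Γ₂ f Ξ p i j m * T m = -(1 / 2) * dx i * dx j * ∑ m, grad f Ξ p m * T m := by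
  have hT' : ∀ m, (gmet f Ξ p)⁻¹ m 0 * T m = 0 := fun m => by
    rcases eq_or_ne m (Fin.last (ν + 1)) with rfl | hm
    · simp [hT]
    · simp [inv_gmet_apply_zero p hm]
  rw [Finset.mul_sum]
  refine Finset.sum_congr rfl fun m _ => ?_
  rw [Γ₂_eq]
  linear_combination 1 / 2 * (dx j * pd (fLift f) i p + dx i * pd (fLift f) j p) * hT' m

lemma sum_Γ₁_mul_Γ₂ (hf : Differentiable ℝ f) (p : Fin (ν + 2) → ℝ) (i j k l : Fin (ν + 2)) :
    ∑ n, Γ₁ f Ξ p i n l * Γ₂ f Ξ p j k n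
      = -(1 / 4) * (dx i * dx j * dx k * dx l) * ∑ n, grad f Ξ p n * pd (fLift f) n p := by
  have hlast : Γ₁ f Ξ p i (Fin.last (ν + 1)) l = 0 := by
    simp [Γ₁_eq, dx_last, pd_fLift_last hf]
  simp_rw [mul_comm (Γ₁ f Ξ p _ _ _)]
  rw [sum_Γ₂_mul p j k hlast, Finset.mul_sum, Finset.mul_sum]
  refine Finset.sum_congr rfl fun n _ => ?_
  rw [Γ₁_eq]
  linear_combination (-(1 / 4) * dx j * dx k * (dx l * pd (fLift f) i p
    - dx i * pd (fLift f) l p)) * dx_mul_grad hf p n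

def negHalfHess (f : (Fin ν → ℝ) → ℝ) (p : Fin (ν + 2) → ℝ) :
    Matrix (Fin (ν + 2)) (Fin (ν + 2)) ℝ :=
  fun i k => -(1 / 2) * pd (pd (fLift f) k) i p

lemma negHalfHess_comm (hf : ContDiff ℝ 2 f) (p : Fin (ν + 2) → ℝ) (i k : Fin (ν + 2)) :
    negHalfHess f p i k = negHalfHess f p k i := by
  rw [negHalfHess, negHalfHess, pd_pd_comm (contDiff_fLift hf)]

lemma negHalfHess_last_left (hf : ContDiff ℝ 2 f) (p : Fin (ν + 2) → ℝ) (k : Fin (ν + 2)) :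
    negHalfHess f p (Fin.last (ν + 1)) k = 0 := by
  rw [negHalfHess_comm hf]
  simp [negHalfHess, pd_fLift_last (hf.differentiable two_ne_zero), pd]

lemma pd_negHalfHess (hf : ContDiff ℝ 3 f) (p : Fin (ν + 2) → ℝ) (a b n : Fin (ν + 2)) :
    pd (fun q => negHalfHess f q a b) n p = -(1 / 2) * pd (pd (pd (fLift f) n) b) a p := by
  simp only [negHalfHess]
  rw [pd_const_mul (differentiable_pd_pd (contDiff_fLift hf) a b p),
    pd_pd_pd_rotate (contDiff_fLift hf)]

lemma pd_Γ₁ (hf : ContDiff ℝ 2 f) (p : Fin (ν + 2) → ℝ) (i j k l : Fin (ν + 2)) :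
    pd (fun q => Γ₁ f Ξ q j k l) i p = -(dx k * dx l * negHalfHess f p i j
      + dx j * dx l * negHalfHess f p i k - dx j * dx k * negHalfHess f p i l) := by
  have hd : ∀ m, Differentiable ℝ (pd (fLift f) m) := fun m =>
    (contDiff_pd (k := 1) (contDiff_fLift hf) m).differentiable one_ne_zero
  simp (disch := fun_prop) only [Γ₁_eq, pd_const_mul, pd_add, pd_sub]
  simp only [negHalfHess]
  ring

lemma Rc_eq_kulkarniNomizu (hf : ContDiff ℝ 2 f) (p : Fin (ν + 2) → ℝ) (i j k l : Fin (ν + 2)) :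
    Rc f Ξ p i j k l = kulkarniNomizu (negHalfHess f p) (vecMulVec dx dx) i j k l := by
  have hf1 := hf.differentiable two_ne_zero
  rw [Rc, Finset.sum_sub_distrib, sum_Γ₁_mul_Γ₂ hf1, sum_Γ₁_mul_Γ₂ hf1, pd_Γ₁ hf, pd_Γ₁ hf,
    negHalfHess_comm hf p j i]
  simp only [kulkarniNomizu, vecMulVec_apply]
  ring

def connectionMatrix (f : (Fin ν → ℝ) → ℝ) (Ξ : Matrix (Fin ν) (Fin ν) ℝ)
    (p : Fin (ν + 2) → ℝ) (n : Fin (ν + 2)) : Matrix (Fin (ν + 2)) (Fin (ν + 2)) ℝ :=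
  of fun i m => Γ₂ f Ξ p n i m

lemma connectionMatrix_act_dx (hf : Differentiable ℝ f) (p : Fin (ν + 2) → ℝ)
    (n : Fin (ν + 2)) :
    connectionMatrix f Ξ p n * vecMulVec dx dx + vecMulVec dx dx * (connectionMatrix f Ξ p n)ᵀ
      = 0 := by
  have hΓ : ∀ i m, Γ₂ f Ξ p n i m * dx m = 0 := fun i m => by
    rcases eq_or_ne m 0 with rfl | hm
    · simp [Γ₂_zero_right hf]
    · simp [dx, hm]
  ext i k
  simp only [Matrix.add_apply, mul_apply, transpose_apply, connectionMatrix, of_apply,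
    vecMulVec_apply, Matrix.zero_apply, ← Finset.sum_add_distrib]
  exact Finset.sum_eq_zero fun m _ => by linear_combination dx k * hΓ i m + dx i * hΓ k m

lemma connectionMatrix_act_negHalfHess (hf : ContDiff ℝ 2 f) (p : Fin (ν + 2) → ℝ)
    (n : Fin (ν + 2)) : ∃ Y : Fin (ν + 2) → ℝ,
    connectionMatrix f Ξ p n * negHalfHess f p + negHalfHess f p * (connectionMatrix f Ξ p n)ᵀ
      = vecMulVec dx Y + vecMulVec Y dx := by
  refine ⟨fun k => -(1 / 2) * dx n * ∑ m, grad f Ξ p m * negHalfHess f p m k, ?_⟩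
  ext i k
  simp only [Matrix.add_apply, mul_apply, transpose_apply, connectionMatrix, of_apply,
    vecMulVec_apply]
  simp_rw [mul_comm (negHalfHess f p i _), negHalfHess_comm hf p i]
  rw [sum_Γ₂_mul p n i (negHalfHess_last_left hf p k),
    sum_Γ₂_mul p n k (negHalfHess_last_left hf p i)]
  ring

lemma RcD_eq_kulkarniNomizu (hf : ContDiff ℝ 3 f) (p : Fin (ν + 2) → ℝ)
    (i j k l n : Fin (ν + 2)) :
    RcD f Ξ p i j k l n = kulkarniNomizu (of fun a b => pd (fun q => negHalfHess f q a b) n p)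
      (vecMulVec dx dx) i j k l := by
  have hf2 : ContDiff ℝ 2 f := hf.of_le (by norm_num)
  have hd : ∀ a b, DifferentiableAt ℝ (fun q => negHalfHess f q a b) p := fun a b =>
    ((differentiable_pd_pd (contDiff_fLift hf) a b).const_mul _) p
  obtain ⟨Y, hY⟩ := connectionMatrix_act_negHalfHess hf2 p n
  have hcorr := sum_mul_kulkarniNomizu (connectionMatrix f Ξ p n) (negHalfHess f p)
    (vecMulVec dx dx) i j k l
  rw [hY, connectionMatrix_act_dx (hf2.differentiable two_ne_zero),
    kulkarniNomizu_symm_vecMulVec, kulkarniNomizu_zero_right, add_zero] at hcorr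
  simp only [connectionMatrix, of_apply] at hcorr
  simp only [RcD, Rc_eq_kulkarniNomizu hf2, hcorr, pd_kulkarniNomizu hd, sub_zero]

end MetricGf

theorem nabla_R_is_nabla_R_LS_general (ν : ℕ)
    (c : Fin ν → Fin ν → Fin ν → ℝ)
    (f : (Fin ν → ℝ) → ℝ)
    (hf : f = fun u => -((1 / 3) * ∑ a, ∑ b, ∑ d, c a b d * u a * u b * u d))
    (Ξ : Matrix (Fin ν) (Fin ν) ℝ)
    (L : Fin (ν + 2) → Fin (ν + 2) → ℝ)
    (hL : ∀ i j : Fin (ν + 2), L i j = if i = 0 ∧ j = 0 then 1 else 0)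
    (S : (Fin (ν + 2) → ℝ) → Fin (ν + 2) → Fin (ν + 2) → Fin (ν + 2) → ℝ)
    (hS : ∀ (p : Fin (ν + 2) → ℝ) (i j k : Fin (ν + 2)),
      S p i j k =
        -((1 / 2) * pd (fun q => pd (fun r => pd (fun w => f (uC w)) k r) j q) i p)) :
    ∀ (p : Fin (ν + 2) → ℝ) (i j k l n : Fin (ν + 2)),
      RcD f Ξ p i j k l n =
        S p i l n * L j k + L i l * S p j k n - S p i k n * L j l - L i k * S p j l n := by
  intro p i j k l n
  have hf3 : ContDiff ℝ 3 f := by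
    subst hf
    fun_prop
  have hL' : ∀ a b, L a b = MetricGf.dx a * MetricGf.dx b := fun a b => by
    by_cases ha : a = 0 <;> by_cases hb : b = 0 <;> simp [hL, MetricGf.dx, ha, hb]
  have hS' : ∀ a b, S p a b n = pd (fun q => MetricGf.negHalfHess f q a b) n p := fun a b => by
    rw [hS, MetricGf.pd_negHalfHess hf3, neg_mul]
    rfl
  simp only [MetricGf.RcD_eq_kulkarniNomizu hf3, kulkarniNomizu, Matrix.of_apply,
    Matrix.vecMulVec_apply, hL', hS']

/-- for the cubic function `f(u) = -(1/3) Σ c_{abc} u_a u_b u_c`, the covariant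
derivative curvature tensor of `g_f` is `∇R_{L,S}` for `L(e_i,e_j) = δ_{0i} δ_{0j}` and
`S(e_i,e_j,e_k) = -(1/2) ∂_i ∂_j ∂_k f`. -/
theorem nabla_R_is_nabla_R_LS (ν : ℕ) (hν : 1 ≤ ν)
    (c : Fin ν → Fin ν → Fin ν → ℝ)
    (hc1 : ∀ a b d : Fin ν, c a b d = c b a d)
    (hc2 : ∀ a b d : Fin ν, c a b d = c a d b)
    (f : (Fin ν → ℝ) → ℝ)
    (hf : f = fun u => -((1 / 3) * ∑ a, ∑ b, ∑ d, c a b d * u a * u b * u d))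
    (Ξ : Matrix (Fin ν) (Fin ν) ℝ) (hΞsym : Ξ.IsSymm) (hΞinv : IsUnit Ξ.det)
    (L : Fin (ν + 2) → Fin (ν + 2) → ℝ)
    (hL : ∀ i j : Fin (ν + 2), L i j = if i = 0 ∧ j = 0 then 1 else 0)
    (S : (Fin (ν + 2) → ℝ) → Fin (ν + 2) → Fin (ν + 2) → Fin (ν + 2) → ℝ)
    (hS : ∀ (p : Fin (ν + 2) → ℝ) (i j k : Fin (ν + 2)),
      S p i j k =
        -((1 / 2) * pd (fun q => pd (fun r => pd (fun w => f (uC w)) k r) j q) i p)) :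
    ∀ (p : Fin (ν + 2) → ℝ) (i j k l n : Fin (ν + 2)),
      RcD f Ξ p i j k l n =
        S p i l n * L j k + L i l * S p j k n - S p i k n * L j l - L i k * S p j l n :=
  nabla_R_is_nabla_R_LS_general ν c f hf Ξ L hL S hS
end
end

section
/- Let {X,U,V,Y} be a basis of ℝ^4 and let c ∈ ℝ. Let g be the symmetric bilinear form on ℝ^4 with g(X,X) = c, g(X,Y) = 1, g(U,V) = 1, and all other products of distinct pairs of basis vectors (and all other diagonal values) equal to 0. Let ∇R be the 5-linear form on ℝ^4 whose only nonzero components on the basis, up to the symmetries ∇R(x_1,x_2,x_3,x_4;x_5) = −∇R(x_2,x_1,x_3,x_4;x_5) = −∇R(x_1,x_2,x_4,x_3;x_5) = ∇R(x_3,x_4,x_1,x_2;x_5), are ∇R(X,U,U,X;U) = 1. Then: (i) g is nondegenerate of signature (2,2); (ii) the Szabó operator satisfies 𝒮(ξ)² = 0 for every ξ ∈ ℝ^4; (iii) there exists ξ_0 ∈ ℝ^4 with 𝒮(ξ_0) ≠ 0. -/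
/-!
Write `α, β` for the `X`- and `U`-coordinates. The symmetries and the prescribed components force
`∇R(y,ξ,ξ,z;ξ) = β(ξ) L(y) L(z)` with `L = β(ξ) α - α(ξ) β`. So `g(𝒮(ξ)y, ·)` is a multiple of
`L`, whose `g`-dual `β(ξ) Y - α(ξ) V` lies in the totally isotropic plane `span {Y, V} ⊆ ker L`.
Hence `𝒮(ξ)` maps into `ker L`, which it kills by nondegeneracy: `𝒮(ξ)² = 0`.
-/

open Module

/-- The Gram matrix of `g` in the basis `X, U, V, Y`. -/
def neutralGram (c : ℝ) : Matrix (Fin 4) (Fin 4) ℝ :=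
  !![c, 0, 0, 1; 0, 0, 1, 0; 0, 1, 0, 0; 1, 0, 0, 0]

namespace LinearMap.BilinForm

variable {K V ι : Type*} [Field K] [AddCommGroup V] [Module K V] [DecidableEq ι]
  {B : LinearMap.BilinForm K V} {s : ι → K}

theorem linearIndependent_of_apply_eq_ite {v : ι → V} (hs : ∀ i, s i ≠ 0)
    (hv : ∀ i j, B (v i) (v j) = if i = j then s i else 0) : LinearIndependent K v :=
  linearIndependent_of_iIsOrtho (B := B) (iIsOrtho_def.2 fun i j hij => by simp [hv, hij])
    fun i => by simpa [hv] using hs i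

theorem separatingLeft_of_basis_apply_eq_ite (e : Basis ι K V) (hs : ∀ i, s i ≠ 0)
    (he : ∀ i j, B (e i) (e j) = if i = j then s i else 0) : B.SeparatingLeft :=
  ((iIsOrtho.nondegenerate_iff_not_isOrtho_basis_self B e
    (iIsOrtho_def.2 fun i j hij => by simp [he, hij])).2 fun i => by simpa [he] using hs i).1

end LinearMap.BilinForm

/-- If `g(x,x) = c`, `g(x,y) = 1` and `g(y,y) = 0`, the vectors `x + ((±1 - c) / 2) y` are
orthogonal with squares `±1`; this is applied to `(X, Y)` and to `(V, U)`, with `c = 0`. -/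
theorem exists_basis_signature_two_two_of_neutralGram {V : Type*} [AddCommGroup V] [Module ℝ V]
    (b : Basis (Fin 4) ℝ V) (c : ℝ) (g : LinearMap.BilinForm ℝ V)
    (hgram : ∀ i j, g (b i) (b j) = neutralGram c i j) :
    ∃ e : Basis (Fin 2 ⊕ Fin 2) ℝ V, ∀ i j,
      g (e i) (e j) = if i = j then Sum.elim (fun _ => (1 : ℝ)) (fun _ => (-1 : ℝ)) i else 0 := by
  have : FiniteDimensional ℝ V := .of_basis b
  let v : Fin 2 ⊕ Fin 2 → V := Sum.elim ![b 0 + ((1 - c) / 2) • b 3, b 2 + (1 / 2 : ℝ) • b 1]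
    ![b 0 + ((-1 - c) / 2) • b 3, b 2 - (1 / 2 : ℝ) • b 1]
  have hv : ∀ i j, g (v i) (v j) =
      if i = j then Sum.elim (fun _ => (1 : ℝ)) (fun _ => (-1 : ℝ)) i else 0 := by
    intro i j
    rcases i with i | i <;> rcases j with j | j <;> fin_cases i <;> fin_cases j <;>
      simp only [v, Sum.elim_inl, Sum.elim_inr, Sum.inl.injEq, Sum.inr.injEq, reduceCtorEq,
        Matrix.cons_val_zero, Matrix.cons_val_one, Matrix.cons_val_fin_one, Fin.isValue,
        Fin.zero_eta, Fin.mk_one, map_add, map_sub, map_smul, LinearMap.add_apply,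
        LinearMap.sub_apply, LinearMap.smul_apply, smul_eq_mul, hgram, neutralGram,
        Matrix.of_apply, Matrix.cons_val', Matrix.cons_val, zero_ne_one, one_ne_zero,
        ↓reduceIte] <;>
      ring
  have hs : ∀ i : Fin 2 ⊕ Fin 2, Sum.elim (fun _ => (1 : ℝ)) (fun _ => (-1 : ℝ)) i ≠ 0 := by
    rintro (i | i) <;> norm_num
  have hcard : Fintype.card (Fin 2 ⊕ Fin 2) = finrank ℝ V := by simp [finrank_eq_card_basis b]
  refine ⟨basisOfLinearIndependentOfCardEqFinrank
    (LinearMap.BilinForm.linearIndependent_of_apply_eq_ite hs hv) hcard, ?_⟩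
  rwa [coe_basisOfLinearIndependentOfCardEqFinrank]

section

variable {R V : Type*} [CommRing R] [AddCommGroup V] [Module R V]

theorem Module.Basis.apply_eq_coord_of_apply_basis {ι : Type*} [DecidableEq ι] (b : Basis ι R V)
    (B : V →ₗ[R] V →ₗ[R] R) {y : V} {k : ι} (h : ∀ i, B (b i) y = if i = k then 1 else 0)
    (w : V) : B w y = b.coord k w :=
  LinearMap.congr_fun (b.ext (f₁ := B.flip y) fun i => by simp [h, Finsupp.single_apply]) w

theorem sq_eq_zero_of_apply_apply_eq_mul_of_isotropic {B : V →ₗ[R] V →ₗ[R] R}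
    (hB : B.SeparatingLeft) {S : Module.End R V} {k : R} {L : V →ₗ[R] R} {η : V}
    (hη : ∀ w, B w η = L w) (hLη : L η = 0) (hS : ∀ y z, B (S y) z = k * L y * L z) :
    S ^ 2 = 0 := by
  have hLS : ∀ y, L (S y) = 0 := fun y => by rw [← hη, hS, hLη, mul_zero]
  ext y
  rw [pow_two, Module.End.mul_apply, LinearMap.zero_apply]
  exact hB _ fun z => by rw [hS, hLS, mul_zero, zero_mul]

/-- `(α ∧ β)(x₀, x₁) (β ∧ α)(x₂, x₃) β(x₄)`: when `α, β` are the `X`- and `U`-coordinates, the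
5-linear form whose only nonzero component up to the symmetries is `∇R(X,U,U,X;U) = 1`. -/
def modelNablaR (α β : V →ₗ[R] R) : MultilinearMap R (fun _ : Fin 5 => V) R :=
  let P := fun f : Fin 5 → V →ₗ[R] R => (MultilinearMap.mkPiAlgebra R (Fin 5) R).compLinearMap f
  P ![α, β, β, α, β] - P ![α, β, α, β, β] - P ![β, α, β, α, β] + P ![β, α, α, β, β]

theorem modelNablaR_apply (α β : V →ₗ[R] R) (x : Fin 5 → V) :
    modelNablaR α β x = (α (x 0) * β (x 1) - β (x 0) * α (x 1)) *
      (β (x 2) * α (x 3) - α (x 2) * β (x 3)) * β (x 4) := by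
  simp only [modelNablaR, add_apply, sub_apply, MultilinearMap.compLinearMap_apply,
    MultilinearMap.mkPiAlgebra_apply, Fin.prod_univ_five, Matrix.cons_val_zero,
    Matrix.cons_val_one, Matrix.cons_val]
  ring

theorem sq_eq_zero_of_apply_eq_modelNablaR {g : V →ₗ[R] V →ₗ[R] R} (hg : g.SeparatingLeft)
    {α β : V →ₗ[R] R} {p q : V} (hp : ∀ w, g w p = α w) (hq : ∀ w, g w q = β w)
    (hαp : α p = 0) (hαq : α q = 0) (hβp : β p = 0) (hβq : β q = 0) {ξ : V}
    {S : Module.End R V} (hS : ∀ y z, g (S y) z = modelNablaR α β ![y, ξ, ξ, z, ξ]) :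
    S ^ 2 = 0 := by
  refine sq_eq_zero_of_apply_apply_eq_mul_of_isotropic hg (k := β ξ) (L := β ξ • α - α ξ • β)
    (η := β ξ • p - α ξ • q) (fun w => ?_) ?_ fun y z => ?_
  · simp [hp, hq]
  · simp [hαp, hαq, hβp, hβq]
  · rw [hS, modelNablaR_apply]
    simp only [Matrix.cons_val_zero, Matrix.cons_val_one, Matrix.cons_val, LinearMap.sub_apply,
      LinearMap.smul_apply, smul_eq_mul]
    ring

variable {ι : Type*} [DecidableEq ι] (b : Basis ι R V) {x u : ι}

theorem Module.Basis.eq_or_eq_of_coord_wedge_ne_zero {i j : ι}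
    (h : b.coord x (b i) * b.coord u (b j) - b.coord u (b i) * b.coord x (b j) ≠ 0) :
    (i = x ∧ j = u) ∨ (i = u ∧ j = x) := by
  simp only [Basis.coord_apply, b.repr_self_apply] at h
  split_ifs at h <;> simp_all

theorem Module.Basis.eq_modelNablaR (hxu : x ≠ u) (dR : MultilinearMap R (fun _ : Fin 5 => V) R)
    (hsym1 : ∀ x₁ x₂ x₃ x₄ x₅, dR ![x₁, x₂, x₃, x₄, x₅] = -dR ![x₂, x₁, x₃, x₄, x₅])
    (hsym2 : ∀ x₁ x₂ x₃ x₄ x₅, dR ![x₁, x₂, x₃, x₄, x₅] = -dR ![x₁, x₂, x₄, x₃, x₅])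
    (hval : dR ![b x, b u, b u, b x, b u] = 1)
    (hvanish : ∀ i₁ i₂ i₃ i₄ i₅ : ι,
      ¬(((i₁ = x ∧ i₂ = u) ∨ (i₁ = u ∧ i₂ = x)) ∧
        ((i₃ = u ∧ i₄ = x) ∨ (i₃ = x ∧ i₄ = u)) ∧ i₅ = u) →
      dR ![b i₁, b i₂, b i₃, b i₄, b i₅] = 0) :
    dR = modelNablaR (b.coord x) (b.coord u) := by
  refine Basis.ext_multilinear (fun _ => b) fun r => ?_
  have htuple : (fun i => b (r i)) = ![b (r 0), b (r 1), b (r 2), b (r 3), b (r 4)] :=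
    funext fun i => by fin_cases i <;> rfl
  simp only [modelNablaR_apply]
  rw [htuple]
  by_cases hP : ((r 0 = x ∧ r 1 = u) ∨ (r 0 = u ∧ r 1 = x)) ∧
      ((r 2 = u ∧ r 3 = x) ∨ (r 2 = x ∧ r 3 = u)) ∧ r 4 = u
  · obtain ⟨⟨h0, h1⟩ | ⟨h0, h1⟩, ⟨h2, h3⟩ | ⟨h2, h3⟩, h4⟩ := hP <;>
      simp only [h0, h1, h2, h3, h4, Basis.coord_apply, b.repr_self_apply, hxu, hxu.symm]
    · simp [hval]
    · rw [hsym2, hval]; simp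
    · rw [hsym1, hval]; simp
    · rw [hsym1, hsym2, hval]; simp
  · rw [hvanish _ _ _ _ _ hP, eq_comm]
    by_contra hne
    have h01 := left_ne_zero_of_mul (left_ne_zero_of_mul hne)
    have h23 := right_ne_zero_of_mul (left_ne_zero_of_mul hne)
    have h4 := right_ne_zero_of_mul hne
    rw [← neg_sub, neg_ne_zero] at h23
    refine hP ⟨b.eq_or_eq_of_coord_wedge_ne_zero h01,
      (b.eq_or_eq_of_coord_wedge_ne_zero h23).symm, ?_⟩
    by_contra h
    simp [h] at h4

end

theorem szabo_nilpotent_order_two_R4_general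
    (b : Module.Basis (Fin 4) ℝ (Fin 4 → ℝ)) (c : ℝ)
    (g : (Fin 4 → ℝ) →ₗ[ℝ] (Fin 4 → ℝ) →ₗ[ℝ] ℝ)
    (hgsym : ∀ v w, g v w = g w v)
    (hgXX : g (b 0) (b 0) = c)
    (hgXY : g (b 0) (b 3) = 1)
    (hgUV : g (b 1) (b 2) = 1)
    (hg0 : ∀ i j : Fin 4,
      ¬((i = 0 ∧ j = 0) ∨ (i = 0 ∧ j = 3) ∨ (i = 3 ∧ j = 0) ∨
        (i = 1 ∧ j = 2) ∨ (i = 2 ∧ j = 1)) →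
      g (b i) (b j) = 0)
    (dR : MultilinearMap ℝ (fun _ : Fin 5 => (Fin 4 → ℝ)) ℝ)
    (hsym1 : ∀ x₁ x₂ x₃ x₄ x₅, dR ![x₁, x₂, x₃, x₄, x₅] = -dR ![x₂, x₁, x₃, x₄, x₅])
    (hsym2 : ∀ x₁ x₂ x₃ x₄ x₅, dR ![x₁, x₂, x₃, x₄, x₅] = -dR ![x₁, x₂, x₄, x₃, x₅])
    (hval : dR ![b 0, b 1, b 1, b 0, b 1] = 1)
    (hvanish : ∀ i₁ i₂ i₃ i₄ i₅ : Fin 4,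
      ¬(((i₁ = 0 ∧ i₂ = 1) ∨ (i₁ = 1 ∧ i₂ = 0)) ∧
        ((i₃ = 1 ∧ i₄ = 0) ∨ (i₃ = 0 ∧ i₄ = 1)) ∧ i₅ = 1) →
      dR ![b i₁, b i₂, b i₃, b i₄, b i₅] = 0) :
    (∃ e : Module.Basis (Fin 2 ⊕ Fin 2) ℝ (Fin 4 → ℝ), ∀ i j,
      g (e i) (e j) =
        if i = j then Sum.elim (fun _ => (1 : ℝ)) (fun _ => (-1 : ℝ)) i else 0) ∧
    (∀ v, (∀ w, g v w = 0) → v = 0) ∧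
    (∀ S : (Fin 4 → ℝ) → Module.End ℝ (Fin 4 → ℝ),
      (∀ ξ y z, g (S ξ y) z = dR ![y, ξ, ξ, z, ξ]) →
      (∀ ξ, S ξ ^ 2 = 0) ∧ ∃ ξ₀, S ξ₀ ≠ 0) := by
  have hgram : ∀ i j, g (b i) (b j) = neutralGram c i j := by
    intro i j
    fin_cases i <;> fin_cases j <;> first
      | exact hg0 _ _ (by decide)
      | simp [neutralGram, hgXX, hgXY, hgUV, hgsym (b 3) (b 0), hgsym (b 2) (b 1)]
  obtain ⟨e, he⟩ := exists_basis_signature_two_two_of_neutralGram b c g hgram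
  have hsep : g.SeparatingLeft :=
    LinearMap.BilinForm.separatingLeft_of_basis_apply_eq_ite e (by rintro (i | i) <;> norm_num) he
  have hdR := b.eq_modelNablaR (x := 0) (u := 1) (by decide) dR hsym1 hsym2 hval hvanish
  have hY := b.apply_eq_coord_of_apply_basis g (y := b 3) (k := 0) fun i => by
    fin_cases i <;> simp [hgram, neutralGram]
  have hV := b.apply_eq_coord_of_apply_basis g (y := b 2) (k := 1) fun i => by
    fin_cases i <;> simp [hgram, neutralGram]
  refine ⟨⟨e, he⟩, hsep, fun S hS => ⟨fun ξ => ?_, b 1, fun h => ?_⟩⟩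
  · exact sq_eq_zero_of_apply_eq_modelNablaR hsep hY hV (by simp) (by simp) (by simp) (by simp)
      fun y z => by rw [hS, hdR]
  · have h10 := hS (b 1) (b 0) (b 0)
    rw [h, hval] at h10
    simp at h10

/-- for the inner product with `g(X,X) = c`, `g(X,Y) = g(U,V) = 1` on `ℝ⁴`
and the 5-linear form with `∇R(X,U,U,X;U) = 1` as its only nonzero component up to the
usual symmetries, `g` has signature `(2,2)` and the Szabó operator `𝒮(ξ)`, defined by
`g(𝒮(ξ)y,z) = ∇R(y,ξ,ξ,z;ξ)`, satisfies `𝒮(ξ)² = 0` for all `ξ` and `𝒮(ξ₀) ≠ 0` for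
some `ξ₀`. -/
theorem szabo_nilpotent_order_two_R4
    (b : Module.Basis (Fin 4) ℝ (Fin 4 → ℝ)) (c : ℝ)
    (g : (Fin 4 → ℝ) →ₗ[ℝ] (Fin 4 → ℝ) →ₗ[ℝ] ℝ)
    (hgsym : ∀ v w, g v w = g w v)
    (hgXX : g (b 0) (b 0) = c)
    (hgXY : g (b 0) (b 3) = 1)
    (hgUV : g (b 1) (b 2) = 1)
    (hg0 : ∀ i j : Fin 4,
      ¬((i = 0 ∧ j = 0) ∨ (i = 0 ∧ j = 3) ∨ (i = 3 ∧ j = 0) ∨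
        (i = 1 ∧ j = 2) ∨ (i = 2 ∧ j = 1)) →
      g (b i) (b j) = 0)
    (dR : MultilinearMap ℝ (fun _ : Fin 5 => (Fin 4 → ℝ)) ℝ)
    (hsym1 : ∀ x₁ x₂ x₃ x₄ x₅, dR ![x₁, x₂, x₃, x₄, x₅] = -dR ![x₂, x₁, x₃, x₄, x₅])
    (hsym2 : ∀ x₁ x₂ x₃ x₄ x₅, dR ![x₁, x₂, x₃, x₄, x₅] = -dR ![x₁, x₂, x₄, x₃, x₅])
    (hsym3 : ∀ x₁ x₂ x₃ x₄ x₅, dR ![x₁, x₂, x₃, x₄, x₅] = dR ![x₃, x₄, x₁, x₂, x₅])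
    (hval : dR ![b 0, b 1, b 1, b 0, b 1] = 1)
    (hvanish : ∀ i₁ i₂ i₃ i₄ i₅ : Fin 4,
      ¬(((i₁ = 0 ∧ i₂ = 1) ∨ (i₁ = 1 ∧ i₂ = 0)) ∧
        ((i₃ = 1 ∧ i₄ = 0) ∨ (i₃ = 0 ∧ i₄ = 1)) ∧ i₅ = 1) →
      dR ![b i₁, b i₂, b i₃, b i₄, b i₅] = 0) :
    (∃ e : Module.Basis (Fin 2 ⊕ Fin 2) ℝ (Fin 4 → ℝ), ∀ i j,
      g (e i) (e j) =
        if i = j then Sum.elim (fun _ => (1 : ℝ)) (fun _ => (-1 : ℝ)) i else 0) ∧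
    (∀ v, (∀ w, g v w = 0) → v = 0) ∧
    (∀ S : (Fin 4 → ℝ) → Module.End ℝ (Fin 4 → ℝ),
      (∀ ξ y z, g (S ξ y) z = dR ![y, ξ, ξ, z, ξ]) →
      (∀ ξ, S ξ ^ 2 = 0) ∧ ∃ ξ₀, S ξ₀ ≠ 0) :=
  szabo_nilpotent_order_two_R4_general b c g hgsym hgXX hgXY hgUV hg0 dR hsym1 hsym2 hval hvanish
end

section
/- Let {X,U,V,Y} be a basis of ℝ^4 and let c ∈ ℝ. Let g be the symmetric bilinear form with g(X,X) = c, g(X,Y) = 1, g(U,V) = 1, all other products 0. Let R be the 4-linear form whose only nonzero components on the basis, up to the symmetries R(x_1,x_2,x_3,x_4) = −R(x_2,x_1,x_3,x_4) = −R(x_1,x_2,x_4,x_3) = R(x_3,x_4,x_1,x_2), are R(X,U,U,X) = 1. Then: (i) g is nondegenerate of signature (2,2); (ii) the Jacobi operator satisfies J(ξ)² = 0 for every ξ ∈ ℝ^4; (iii) there exists ξ_0 with J(ξ_0) ≠ 0. -/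
/-!
In the basis `X, U, V, Y` the curvature is `R(x₁, x₂, x₃, x₄) = ω(x₁, x₂) ω(x₄, x₃)`, where
`ω = X* ∧ U*` is the area form of the `(X, U)`-plane, so `g(J(ξ) y, z) = ω(y, ξ) ω(z, ξ)`.
The form `ω(·, ξ)` is `g(w_ξ, ·)` for `w_ξ = ξ_U Y - ξ_X V`, hence by nondegeneracy
`J(ξ) y = ω(y, ξ) w_ξ`. As `w_ξ` has no `X`, `U` components, `ω(w_ξ, ξ) = 0` and `J(ξ)² = 0`,
while `J(U) X = Y`. Signature and nondegeneracy come from an explicit orthonormal basis.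
-/

open Module LinearMap

section General

variable {K W : Type*} [Field K] [AddCommGroup W] [Module K W]

def dualWedge (f g : Dual K W) : W →ₗ[K] W →ₗ[K] K :=
  f.smulRight g - g.smulRight f

@[simp]
lemma dualWedge_apply (f g : Dual K W) (x y : W) : dualWedge f g x y = f x * g y - g x * f y := by
  simp [dualWedge]

def bilinMulBilin (β γ : W →ₗ[K] W →ₗ[K] K) : MultilinearMap K (fun _ : Fin 4 => W) K :=
  .mk' (fun x => β (x 0) (x 1) * γ (x 2) (x 3))
    (fun x i y z => by fin_cases i <;> simp [Function.update_of_ne] <;> ring)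
    (fun x i a y => by fin_cases i <;> simp [Function.update_of_ne] <;> ring)

@[simp]
lemma bilinMulBilin_apply (β γ : W →ₗ[K] W →ₗ[K] K) (x₁ x₂ x₃ x₄ : W) :
    bilinMulBilin β γ ![x₁, x₂, x₃, x₄] = β x₁ x₂ * γ x₃ x₄ := rfl

lemma eq_smulRight_of_separatingLeft {B : W →ₗ[K] W →ₗ[K] K} (hB : B.SeparatingLeft)
    {T : W →ₗ[K] W} {f : Dual K W} {w : W} (h : ∀ y z, B (T y) z = f y * B w z) :
    T = f.smulRight w :=
  LinearMap.ext fun y => sub_eq_zero.mp <| hB _ fun z => by simp [h]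

lemma smulRight_sq_eq_zero {f : Dual K W} {w : W} (hw : f w = 0) : f.smulRight w ^ 2 = 0 :=
  LinearMap.ext fun y => by simp [pow_two, hw]

lemma smulRight_ne_zero {f : Dual K W} {w : W} {y : W} (hy : f y ≠ 0) (hw : w ≠ 0) :
    f.smulRight w ≠ 0 := fun h => by
  simpa [hy, hw] using LinearMap.congr_fun h y

section Diagonal

variable {ι : Type*} [DecidableEq ι] {B : W →ₗ[K] W →ₗ[K] K} {v : ι → W} {s : ι → K}

lemma isOrthoᵢ_of_gram_eq_diagonal (hv : ∀ i j, B (v i) (v j) = if i = j then s i else 0) :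
    B.IsOrthoᵢ v :=
  isOrthoᵢ_def.mpr fun i j hij => by simp [hv, hij]

lemma exists_basis_of_gram_eq_diagonal [FiniteDimensional K W] [Fintype ι] [Nonempty ι]
    (hs : ∀ i, s i ≠ 0) (hv : ∀ i j, B (v i) (v j) = if i = j then s i else 0)
    (hcard : Fintype.card ι = finrank K W) : ∃ e : Basis ι K W, ⇑e = v :=
  have hind : LinearIndependent K v :=
    BilinForm.linearIndependent_of_iIsOrtho (isOrthoᵢ_of_gram_eq_diagonal hv)
      fun i => by simpa [hv] using hs i
  ⟨basisOfLinearIndependentOfCardEqFinrank hind hcard, by simp⟩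

lemma separatingLeft_of_gram_eq_diagonal (e : Basis ι K W) (hs : ∀ i, s i ≠ 0)
    (he : ∀ i j, B (e i) (e j) = if i = j then s i else 0) : B.SeparatingLeft :=
  IsOrthoᵢ.separatingLeft_of_not_isOrtho_basis_self e (isOrthoᵢ_of_gram_eq_diagonal he)
    fun i => by simpa [he] using hs i

end Diagonal

end General

namespace OssermanExample

variable {W : Type*} [AddCommGroup W] [Module ℝ W] (b : Basis (Fin 4) ℝ W) (c : ℝ)

def gram : Matrix (Fin 4) (Fin 4) ℝ := !![c, 0, 0, 1; 0, 0, 1, 0; 0, 1, 0, 0; 1, 0, 0, 0]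

noncomputable def areaForm : W →ₗ[ℝ] W →ₗ[ℝ] ℝ := dualWedge (b.coord 0) (b.coord 1)

lemma areaForm_basis_eq_zero {i j : Fin 4} (h : ¬((i = 0 ∧ j = 1) ∨ (i = 1 ∧ j = 0))) :
    areaForm b (b i) (b j) = 0 := by
  fin_cases i <;> fin_cases j <;> simp_all [areaForm]

lemma eq_toLinearMap₂_gram (g : W →ₗ[ℝ] W →ₗ[ℝ] ℝ)
    (hgsym : ∀ v w, g v w = g w v)
    (hgXX : g (b 0) (b 0) = c)
    (hgXY : g (b 0) (b 3) = 1)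
    (hgUV : g (b 1) (b 2) = 1)
    (hg0 : ∀ i j : Fin 4,
      ¬((i = 0 ∧ j = 0) ∨ (i = 0 ∧ j = 3) ∨ (i = 3 ∧ j = 0) ∨
        (i = 1 ∧ j = 2) ∨ (i = 2 ∧ j = 1)) →
      g (b i) (b j) = 0) :
    g = Matrix.toLinearMap₂ b b (gram c) := by
  refine ext_basis b b fun i j => ?_
  rw [Matrix.toLinearMap₂_apply_basis]
  fin_cases i <;> fin_cases j <;> simp only [gram] <;> norm_num <;>
    first
      | assumption
      | (rw [hgsym]; assumption)
      | exact hg0 _ _ (by decide)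

lemma toLinearMap₂_gram_apply (x y : W) :
    Matrix.toLinearMap₂ b b (gram c) x y = c * b.repr x 0 * b.repr y 0 + b.repr x 0 * b.repr y 3
      + b.repr x 3 * b.repr y 0 + b.repr x 1 * b.repr y 2 + b.repr x 2 * b.repr y 1 := by
  simp only [gram, Matrix.toLinearMap₂_apply, Matrix.of_apply, Matrix.cons_val', smul_eq_mul,
    Matrix.cons_val_fin_one, Fin.sum_univ_four, Matrix.cons_val_zero, Matrix.cons_val_one,
    Matrix.cons_val, mul_zero, add_zero, mul_one, zero_add]
  ring

lemma eq_bilinMulBilin_areaForm (R : MultilinearMap ℝ (fun _ : Fin 4 => W) ℝ)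
    (hsym1 : ∀ x₁ x₂ x₃ x₄, R ![x₁, x₂, x₃, x₄] = -R ![x₂, x₁, x₃, x₄])
    (hsym2 : ∀ x₁ x₂ x₃ x₄, R ![x₁, x₂, x₃, x₄] = -R ![x₁, x₂, x₄, x₃])
    (hval : R ![b 0, b 1, b 1, b 0] = 1)
    (hvanish : ∀ i₁ i₂ i₃ i₄ : Fin 4,
      ¬(((i₁ = 0 ∧ i₂ = 1) ∨ (i₁ = 1 ∧ i₂ = 0)) ∧
        ((i₃ = 1 ∧ i₄ = 0) ∨ (i₃ = 0 ∧ i₄ = 1))) →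
      R ![b i₁, b i₂, b i₃, b i₄] = 0) :
    R = bilinMulBilin (areaForm b) (areaForm b).flip := by
  refine Basis.ext_multilinear (fun _ => b) fun v => ?_
  have hv : (fun i => b (v i)) = ![b (v 0), b (v 1), b (v 2), b (v 3)] := by
    funext i; fin_cases i <;> rfl
  rw [hv, bilinMulBilin_apply, flip_apply]
  by_cases h : ((v 0 = 0 ∧ v 1 = 1) ∨ (v 0 = 1 ∧ v 1 = 0)) ∧
      ((v 2 = 1 ∧ v 3 = 0) ∨ (v 2 = 0 ∧ v 3 = 1))
  · have h1001 : R ![b 1, b 0, b 0, b 1] = 1 := by rw [hsym1, hsym2, hval, neg_neg]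
    have h1010 : R ![b 1, b 0, b 1, b 0] = -1 := by rw [hsym1, hval]
    have h0101 : R ![b 0, b 1, b 0, b 1] = -1 := by rw [hsym2, hval]
    obtain ⟨⟨h0, h1⟩ | ⟨h0, h1⟩, ⟨h2, h3⟩ | ⟨h2, h3⟩⟩ := h <;>
      simp [h0, h1, h2, h3, areaForm, hval, h1001, h1010, h0101]
  · rw [hvanish _ _ _ _ h]
    rcases not_and_or.mp h with h01 | h23
    · rw [areaForm_basis_eq_zero b h01, zero_mul]
    · rw [areaForm_basis_eq_zero b (i := v 3) (j := v 2) (by tauto), mul_zero]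

/-- `X + t Y` has square `c + 2 t`, and `U ± V / 2` has square `± 1`. -/
noncomputable def signatureFamily : Fin 2 ⊕ Fin 2 → W :=
  Sum.elim ![b 0 + ((1 - c) / 2) • b 3, b 1 + (1 / 2 : ℝ) • b 2]
    ![b 0 - ((1 + c) / 2) • b 3, b 1 - (1 / 2 : ℝ) • b 2]

lemma gram_signatureFamily (i j : Fin 2 ⊕ Fin 2) :
    Matrix.toLinearMap₂ b b (gram c) (signatureFamily b c i) (signatureFamily b c j) =
      if i = j then Sum.elim (fun _ => (1 : ℝ)) (fun _ => (-1 : ℝ)) i else 0 := by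
  rw [toLinearMap₂_gram_apply]
  rcases i with i | i <;> rcases j with j | j <;> fin_cases i <;> fin_cases j <;>
    simp [signatureFamily] <;> ring

lemma exists_basis_gram_eq_signature :
    ∃ e : Basis (Fin 2 ⊕ Fin 2) ℝ W, ∀ i j, Matrix.toLinearMap₂ b b (gram c) (e i) (e j) =
      if i = j then Sum.elim (fun _ => (1 : ℝ)) (fun _ => (-1 : ℝ)) i else 0 := by
  have : FiniteDimensional ℝ W := .of_basis b
  obtain ⟨e, he⟩ := exists_basis_of_gram_eq_diagonal
    (s := Sum.elim (fun _ => (1 : ℝ)) (fun _ => (-1 : ℝ))) (by rintro (i | i) <;> simp)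
    (gram_signatureFamily b c) (by simp [finrank_eq_card_basis b])
  exact ⟨e, he ▸ gram_signatureFamily b c⟩

noncomputable def jacobiGenerator (ξ : W) : W := b.coord 1 ξ • b 3 - b.coord 0 ξ • b 2

lemma toLinearMap₂_gram_jacobiGenerator (ξ z : W) :
    Matrix.toLinearMap₂ b b (gram c) (jacobiGenerator b ξ) z = areaForm b z ξ := by
  rw [toLinearMap₂_gram_apply]
  simp [jacobiGenerator, areaForm, mul_comm, sub_eq_add_neg]

lemma areaForm_jacobiGenerator_self (ξ : W) : areaForm b (jacobiGenerator b ξ) ξ = 0 := by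
  simp [jacobiGenerator, areaForm]

lemma jacobi_eq_smulRight (hsep : (Matrix.toLinearMap₂ b b (gram c)).SeparatingLeft)
    (J : W → Module.End ℝ W)
    (hJ : ∀ ξ y z, Matrix.toLinearMap₂ b b (gram c) (J ξ y) z =
      bilinMulBilin (areaForm b) (areaForm b).flip ![y, ξ, ξ, z]) (ξ : W) :
    J ξ = ((areaForm b).flip ξ).smulRight (jacobiGenerator b ξ) :=
  eq_smulRight_of_separatingLeft hsep fun y z => by
    rw [hJ, bilinMulBilin_apply, toLinearMap₂_gram_jacobiGenerator, flip_apply, flip_apply]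

end OssermanExample

open OssermanExample in
theorem osserman_nilpotent_order_two_R4_general
    (b : Module.Basis (Fin 4) ℝ (Fin 4 → ℝ)) (c : ℝ)
    (g : (Fin 4 → ℝ) →ₗ[ℝ] (Fin 4 → ℝ) →ₗ[ℝ] ℝ)
    (hgsym : ∀ v w, g v w = g w v)
    (hgXX : g (b 0) (b 0) = c)
    (hgXY : g (b 0) (b 3) = 1)
    (hgUV : g (b 1) (b 2) = 1)
    (hg0 : ∀ i j : Fin 4,
      ¬((i = 0 ∧ j = 0) ∨ (i = 0 ∧ j = 3) ∨ (i = 3 ∧ j = 0) ∨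
        (i = 1 ∧ j = 2) ∨ (i = 2 ∧ j = 1)) →
      g (b i) (b j) = 0)
    (R : MultilinearMap ℝ (fun _ : Fin 4 => (Fin 4 → ℝ)) ℝ)
    (hsym1 : ∀ x₁ x₂ x₃ x₄, R ![x₁, x₂, x₃, x₄] = -R ![x₂, x₁, x₃, x₄])
    (hsym2 : ∀ x₁ x₂ x₃ x₄, R ![x₁, x₂, x₃, x₄] = -R ![x₁, x₂, x₄, x₃])
    (hval : R ![b 0, b 1, b 1, b 0] = 1)
    (hvanish : ∀ i₁ i₂ i₃ i₄ : Fin 4,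
      ¬(((i₁ = 0 ∧ i₂ = 1) ∨ (i₁ = 1 ∧ i₂ = 0)) ∧
        ((i₃ = 1 ∧ i₄ = 0) ∨ (i₃ = 0 ∧ i₄ = 1))) →
      R ![b i₁, b i₂, b i₃, b i₄] = 0) :
    (∃ e : Module.Basis (Fin 2 ⊕ Fin 2) ℝ (Fin 4 → ℝ), ∀ i j,
      g (e i) (e j) =
        if i = j then Sum.elim (fun _ => (1 : ℝ)) (fun _ => (-1 : ℝ)) i else 0) ∧
    (∀ v, (∀ w, g v w = 0) → v = 0) ∧
    (∀ J : (Fin 4 → ℝ) → Module.End ℝ (Fin 4 → ℝ),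
      (∀ ξ y z, g (J ξ y) z = R ![y, ξ, ξ, z]) →
      (∀ ξ, J ξ ^ 2 = 0) ∧ ∃ ξ₀, J ξ₀ ≠ 0) := by
  obtain rfl := eq_toLinearMap₂_gram b c g hgsym hgXX hgXY hgUV hg0
  obtain rfl := eq_bilinMulBilin_areaForm b R hsym1 hsym2 hval hvanish
  obtain ⟨e, he⟩ := exists_basis_gram_eq_signature b c
  have hsep : (Matrix.toLinearMap₂ b b (gram c)).SeparatingLeft :=
    separatingLeft_of_gram_eq_diagonal e (by rintro (i | i) <;> simp) he
  refine ⟨⟨e, he⟩, hsep, fun J hJ => ⟨fun ξ => ?_, b 1, ?_⟩⟩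
  · rw [jacobi_eq_smulRight b c hsep J hJ]
    exact smulRight_sq_eq_zero (areaForm_jacobiGenerator_self b ξ)
  · rw [jacobi_eq_smulRight b c hsep J hJ]
    refine smulRight_ne_zero (y := b 0) (by simp [areaForm]) ?_
    simpa [jacobiGenerator] using b.ne_zero 3

/-- for the inner product with `g(X,X) = c`, `g(X,Y) = g(U,V) = 1` on `ℝ⁴`
(basis `X = b 0`, `U = b 1`, `V = b 2`, `Y = b 3`) and the 4-linear form with
`R(X,U,U,X) = 1` as its only nonzero component up to the usual symmetries, `g` has
signature `(2,2)` and the Jacobi operator `J(ξ)`, defined by `g(J(ξ)y,z) = R(y,ξ,ξ,z)`,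
satisfies `J(ξ)² = 0` for all `ξ` and `J(ξ₀) ≠ 0` for some `ξ₀`. -/
theorem osserman_nilpotent_order_two_R4
    (b : Module.Basis (Fin 4) ℝ (Fin 4 → ℝ)) (c : ℝ)
    (g : (Fin 4 → ℝ) →ₗ[ℝ] (Fin 4 → ℝ) →ₗ[ℝ] ℝ)
    (hgsym : ∀ v w, g v w = g w v)
    (hgXX : g (b 0) (b 0) = c)
    (hgXY : g (b 0) (b 3) = 1)
    (hgUV : g (b 1) (b 2) = 1)
    (hg0 : ∀ i j : Fin 4,
      ¬((i = 0 ∧ j = 0) ∨ (i = 0 ∧ j = 3) ∨ (i = 3 ∧ j = 0) ∨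
        (i = 1 ∧ j = 2) ∨ (i = 2 ∧ j = 1)) →
      g (b i) (b j) = 0)
    (R : MultilinearMap ℝ (fun _ : Fin 4 => (Fin 4 → ℝ)) ℝ)
    (hsym1 : ∀ x₁ x₂ x₃ x₄, R ![x₁, x₂, x₃, x₄] = -R ![x₂, x₁, x₃, x₄])
    (hsym2 : ∀ x₁ x₂ x₃ x₄, R ![x₁, x₂, x₃, x₄] = -R ![x₁, x₂, x₄, x₃])
    (hsym3 : ∀ x₁ x₂ x₃ x₄, R ![x₁, x₂, x₃, x₄] = R ![x₃, x₄, x₁, x₂])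
    (hval : R ![b 0, b 1, b 1, b 0] = 1)
    (hvanish : ∀ i₁ i₂ i₃ i₄ : Fin 4,
      ¬(((i₁ = 0 ∧ i₂ = 1) ∨ (i₁ = 1 ∧ i₂ = 0)) ∧
        ((i₃ = 1 ∧ i₄ = 0) ∨ (i₃ = 0 ∧ i₄ = 1))) →
      R ![b i₁, b i₂, b i₃, b i₄] = 0) :
    (∃ e : Module.Basis (Fin 2 ⊕ Fin 2) ℝ (Fin 4 → ℝ), ∀ i j,
      g (e i) (e j) =
        if i = j then Sum.elim (fun _ => (1 : ℝ)) (fun _ => (-1 : ℝ)) i else 0) ∧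
    (∀ v, (∀ w, g v w = 0) → v = 0) ∧
    (∀ J : (Fin 4 → ℝ) → Module.End ℝ (Fin 4 → ℝ),
      (∀ ξ y z, g (J ξ y) z = R ![y, ξ, ξ, z]) →
      (∀ ξ, J ξ ^ 2 = 0) ∧ ∃ ξ₀, J ξ₀ ≠ 0) :=
  osserman_nilpotent_order_two_R4_general b c g hgsym hgXX hgXY hgUV hg0 R hsym1 hsym2 hval hvanish
end

section
/- Let ℓ ≥ 1, let {X, U_1,…,U_{ℓ+1}, V_1,…,V_{ℓ+1}, Y} be a basis of ℝ^{2ℓ+4}, and let c ∈ ℝ. Let g be the symmetric bilinear form with g(X,X) = c, g(X,Y) = 1, g(U_a,V_b) = δ_{ab}, all other products 0. Let R be the 4-linear form whose only nonzero components on the basis, up to the symmetries R(x_1,x_2,x_3,x_4) = −R(x_2,x_1,x_3,x_4) = −R(x_1,x_2,x_4,x_3) = R(x_3,x_4,x_1,x_2), are: R(X,U_1,U_1,X) = 1, and for each 2 ≤ a ≤ ℓ+1: R(X,U_a,U_a,X) = R(X,U_a,U_{a−1},X) = R(X,U_a,V_{a−1},X) = 1. Then: (i) g is nondegenerate of signature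 (ℓ+2,ℓ+2); (ii) J(ξ)^{2ℓ+2} = 0 for every ξ ∈ ℝ^{2ℓ+4}; (iii) there exists ξ_0 with J(ξ_0)^{2ℓ+1} ≠ 0. -/
/-!
In the basis `b`, the form `g` pairs `X` with `Y` and `U_a` with `V_a`, so the coordinate of a
vector `w` along a basis vector is `g w` evaluated at its partner (at `X - c Y` for the
coordinate along `Y`). Hence the `(k, i)` entry of the matrix of `J ξ` is `R (b i, ξ, ξ, b k')`
with `b k'` the partner of `b k`, and the listed components of `R` only link `b i` to partners
of basis vectors of lower height, where `X` has height `2ℓ+1`, `U_a` height `ℓ+a`, `V_a` height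
`ℓ+1-a` and `Y` height `0`. So the matrix of `J ξ` is strictly triangular for a grading with values
below `2ℓ+2`, and `J ξ ^ (2ℓ+2) = 0`.

For `ξ = X` all entries are `0` or `1`, and the chain `U_{ℓ+1} → ⋯ → U_1 → V_1 → ⋯ → V_{ℓ+1}` of
`2ℓ+1` unit entries forces an entry `≥ 1` of `J X ^ (2ℓ+1)`.

The signature comes from the `ℓ+2` hyperbolic pairs `(X, Y)`, `(U_a, V_a)`: for such a pair
`(x, y)` the vectors `x + ((±1 - g(x,x))/2) y` are orthogonal with squares `±1`.
-/

open Module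

namespace Matrix

variable {ι R : Type*} [Fintype ι] [DecidableEq ι]

theorem add_le_of_pow_apply_ne_zero [Semiring R] {A : Matrix ι ι R} {h : ι → ℕ}
    (hA : ∀ i j, A i j ≠ 0 → h i < h j) (n : ℕ) {i j : ι} (hij : (A ^ n) i j ≠ 0) :
    h i + n ≤ h j := by
  induction n generalizing i with
  | zero =>
    obtain rfl : i = j := by by_contra hne; exact hij (by simp [hne])
    simp
  | succ n ih =>
    rw [pow_succ', mul_apply] at hij
    obtain ⟨k, -, hk⟩ := Finset.exists_ne_zero_of_sum_ne_zero hij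
    have hik := hA i k (left_ne_zero_of_mul hk)
    have hkj := ih (right_ne_zero_of_mul hk)
    omega

theorem pow_eq_zero_of_lt_grading [Semiring R] {A : Matrix ι ι R} {h : ι → ℕ}
    (hA : ∀ i j, A i j ≠ 0 → h i < h j) {n : ℕ} (hn : ∀ i, h i < n) : A ^ n = 0 := by
  ext i j
  by_contra hij
  have := add_le_of_pow_apply_ne_zero hA n hij
  have := hn j
  omega

theorem one_le_pow_apply_of_chain [Semiring R] [PartialOrder R] [IsOrderedRing R]
    {A : Matrix ι ι R} (hA : ∀ i j, 0 ≤ A i j) {n : ℕ} (p : Fin (n + 1) → ι)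
    (hp : ∀ t : Fin n, 1 ≤ A (p t.succ) (p t.castSucc)) :
    1 ≤ (A ^ n) (p (Fin.last n)) (p 0) := by
  induction n with
  | zero => simp
  | succ n ih =>
    have hlast := ih (fun t => p t.castSucc) (fun t => hp t.castSucc)
    rw [pow_succ', mul_apply]
    calc 1 ≤ A (p (Fin.last (n + 1))) (p (Fin.last n).castSucc) *
          (A ^ n) (p (Fin.last n).castSucc) (p 0) :=
          one_le_mul_of_one_le_of_one_le (hp (Fin.last n)) hlast
      _ ≤ ∑ k, A (p (Fin.last (n + 1))) k * (A ^ n) k (p 0) :=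
          Finset.single_le_sum (f := fun k => A (p (Fin.last (n + 1))) k * (A ^ n) k (p 0))
            (fun k _ => mul_nonneg (hA _ _) (pow_apply_nonneg hA n _ _))
            (Finset.mem_univ _)

end Matrix

theorem MultilinearMap.map_eq_zero_of_basis {ι κ R M N : Type*} [Fintype ι] [DecidableEq ι]
    [Fintype κ] [CommSemiring R] [AddCommMonoid M] [Module R M] [AddCommMonoid N] [Module R N]
    (f : MultilinearMap R (fun _ : ι => M) N) (b : Basis κ R M) (v : ι → M)
    (h : ∀ r : ι → κ, (∀ s, b.repr (v s) (r s) ≠ 0) → f (b ∘ r) = 0) : f v = 0 := by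
  have hv : v = fun s => ∑ j, b.repr (v s) j • b j := funext fun s => (b.sum_repr (v s)).symm
  rw [hv, f.map_sum]
  refine Finset.sum_eq_zero fun r _ => ?_
  rw [f.map_smul_univ (fun s => b.repr (v s) (r s)) (fun s => b (r s))]
  by_cases hr : ∀ s, b.repr (v s) (r s) ≠ 0
  · rw [show (fun s => b (r s)) = b ∘ r from rfl, h r hr, smul_zero]
  · push Not at hr
    obtain ⟨s, hs⟩ := hr
    rw [Finset.prod_eq_zero (Finset.mem_univ s) hs, zero_smul]

theorem Module.Basis.repr_apply_eq_of_dual {ι R M : Type*} [DecidableEq ι] [CommSemiring R]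
    [AddCommMonoid M] [Module R M] (b : Basis ι R M) (B : M →ₗ[R] M →ₗ[R] R) {k : ι} {w : M}
    (hw : ∀ i, B (b i) w = if i = k then 1 else 0) (v : M) : b.repr v k = B v w :=
  LinearMap.congr_fun (b.ext (f₁ := b.coord k) (f₂ := B.flip w) fun i => by
    simp [hw, Finsupp.single_apply]) v

namespace LinearMap

variable {ι κ K M : Type*} [AddCommGroup M]

noncomputable def hyperbolicFrame [Module ℝ M] (x y : ι → M) (c : ι → ℝ) : ι ⊕ ι → M :=
  Sum.elim (fun a => x a + ((1 - c a) / 2) • y a) (fun a => x a + ((-1 - c a) / 2) • y a)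

theorem apply_hyperbolicFrame [Module ℝ M] [DecidableEq ι] {B : M →ₗ[ℝ] M →ₗ[ℝ] ℝ}
    (hB : ∀ v w, B v w = B w v) {x y : ι → M} {c : ι → ℝ}
    (hxx : ∀ a a', B (x a) (x a') = if a = a' then c a else 0)
    (hxy : ∀ a a', B (x a) (y a') = if a = a' then 1 else 0)
    (hyy : ∀ a a', B (y a) (y a') = 0) (p q : ι ⊕ ι) :
    B (hyperbolicFrame x y c p) (hyperbolicFrame x y c q) =
      if p = q then Sum.elim (fun _ => 1) (fun _ => -1) p else 0 := by
  have hpair : ∀ a a' (s t : ℝ), B (x a + s • y a) (x a' + t • y a') =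
      if a = a' then c a + s + t else 0 := by
    intro a a' s t
    simp only [map_add, map_smul, add_apply, smul_apply, smul_eq_mul, hxx, hxy, hyy,
      hB (y a) (x a')]
    obtain rfl | h := eq_or_ne a a'
    · simp only [↓reduceIte]; ring
    · simp only [if_neg h, if_neg h.symm]; ring
  rcases p with a | a <;> rcases q with a' | a' <;>
    simp only [hyperbolicFrame, Sum.elim_inl, Sum.elim_inr, hpair, Sum.inl.injEq, Sum.inr.injEq,
      reduceCtorEq, if_false] <;>
    split_ifs with h <;> (try subst h) <;> ring

theorem exists_basis_of_gram_diagonal [Field K] [Module K M] [FiniteDimensional K M]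
    [Fintype κ] [DecidableEq κ] {B : M →ₗ[K] M →ₗ[K] K} {f : κ → M} {ε : κ → K}
    (hf : ∀ p q, B (f p) (f q) = if p = q then ε p else 0) (hε : ∀ p, ε p ≠ 0)
    (hcard : Fintype.card κ = finrank K M) : ∃ e : Basis κ K M, ⇑e = f :=
  ⟨basisOfLinearIndependentOfCardEqFinrank' f
    (BilinForm.linearIndependent_of_iIsOrtho (B := B)
      (fun p q hpq => by simp [Function.onFun, hf, hpq]) (fun p => by simp [hf, hε]))
    hcard, by simp⟩

theorem separatingLeft_of_gram_diagonal [Field K] [Module K M] [DecidableEq κ]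
    {B : M →ₗ[K] M →ₗ[K] K} (e : Basis κ K M) {ε : κ → K}
    (he : ∀ p q, B (e p) (e q) = if p = q then ε p else 0) (hε : ∀ p, ε p ≠ 0) :
    B.SeparatingLeft :=
  IsOrthoᵢ.separatingLeft_of_not_isOrtho_basis_self (B := B) e
    (fun p q hpq => by simp [Function.onFun, he, hpq]) (fun p => by simp [he, hε])

end LinearMap

namespace NilpotentOsserman

/-! Indices: `X = b 0`, `U_a = b a` and `V_a = b (ℓ+1+a)` for `1 ≤ a ≤ ℓ+1`, `Y = b (2ℓ+3)`. -/

variable {l : ℕ}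

/-- The index pairs `(w₁, w₂)` of the listed components `R (X, b w₁, b w₂, X) = 1`, in both
orders; `(a, ℓ+a)` is `(U_a, V_{a-1})`. -/
def IsSupportPair (l w₁ w₂ : ℕ) : Prop :=
  (w₁ = 1 ∧ w₂ = 1) ∨ ∃ a : ℕ, 2 ≤ a ∧ a ≤ l + 1 ∧
    ((w₁ = a ∧ w₂ = a) ∨ (w₁ = a ∧ w₂ = a - 1) ∨ (w₁ = a - 1 ∧ w₂ = a) ∨
      (w₁ = a ∧ w₂ = l + a) ∨ (w₁ = l + a ∧ w₂ = a))

theorem IsSupportPair.bounds {w₁ w₂ : ℕ} (h : IsSupportPair l w₁ w₂) :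
    1 ≤ w₁ ∧ w₁ ≤ 2 * l + 1 ∧ 1 ≤ w₂ ∧ w₂ ≤ 2 * l + 1 := by
  rcases h with ⟨rfl, rfl⟩ | ⟨a, ha, ha', h⟩ <;> refine ⟨?_, ?_, ?_, ?_⟩ <;> omega

/-- The `g`-partner of a basis index: `X ↔ Y`, `U_a ↔ V_a`. -/
def dualIndex (i : Fin (2 * l + 4)) : Fin (2 * l + 4) :=
  ⟨if i.1 = 0 then 2 * l + 3 else if i.1 ≤ l + 1 then i.1 + (l + 1)
    else if i.1 ≤ 2 * l + 2 then i.1 - (l + 1) else 0, by have := i.isLt; split_ifs <;> omega⟩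

def gram (c : ℝ) (i j : Fin (2 * l + 4)) : ℝ :=
  if j = dualIndex i then 1 else if i.1 = 0 ∧ j.1 = 0 then c else 0

def height (i : Fin (2 * l + 4)) : ℕ :=
  if i.1 = 0 then 2 * l + 1 else if i.1 ≤ l + 1 then l + i.1
    else if i.1 ≤ 2 * l + 2 then 2 * l + 2 - i.1 else 0

/-- `U_{ℓ+1}, …, U_1, V_1, …, V_{ℓ+1}`. -/
def chain (l : ℕ) (t : Fin (2 * l + 1 + 1)) : Fin (2 * l + 4) :=
  ⟨if t.1 ≤ l then l + 1 - t.1 else t.1 + 1, by have := t.isLt; split_ifs <;> omega⟩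

theorem gram_comm (c : ℝ) (i j : Fin (2 * l + 4)) : gram c i j = gram c j i := by
  have := i.isLt
  have := j.isLt
  simp only [gram, dualIndex, Fin.ext_iff]
  split_ifs <;> first | rfl | omega

theorem le_dualIndex {i : Fin (2 * l + 4)} (hi : i.1 ≤ l + 1) : l + 2 ≤ (dualIndex i).1 := by
  simp only [dualIndex]
  split_ifs <;> omega

theorem gram_dualIndex (c : ℝ) (i : Fin (2 * l + 4)) {k : Fin (2 * l + 4)}
    (hk : k.1 ≠ 2 * l + 3) : gram c i (dualIndex k) = if i = k then 1 else 0 := by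
  have := i.isLt
  have := k.isLt
  simp only [gram, dualIndex, Fin.ext_iff]
  split_ifs <;> first | rfl | omega | simp_all

theorem gram_X_sub_mul_gram_Y (c : ℝ) (i : Fin (2 * l + 4)) :
    gram c i 0 - c * gram c i (Fin.last _) = if i = Fin.last _ then 1 else 0 := by
  have := i.isLt
  simp only [gram, dualIndex, Fin.ext_iff, Fin.val_zero, Fin.val_last]
  split_ifs <;> first | ring1 | omega | simp_all

theorem height_lt_two_mul_add_two (i : Fin (2 * l + 4)) : height i < 2 * l + 2 := by
  simp only [height]
  split_ifs <;> omega

theorem height_lt_height {w₁ w₂ : ℕ} (hw : IsSupportPair l w₁ w₂) {i k : Fin (2 * l + 4)}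
    (hi : i.1 = 0 ∨ i.1 = w₁) (hk : (dualIndex k).1 = 0 ∨ (dualIndex k).1 = w₂) :
    height k < height i := by
  have := i.isLt
  have := k.isLt
  simp only [height, dualIndex] at *
  rcases hw with ⟨rfl, rfl⟩ | ⟨a, ha, ha', hw⟩ <;> rcases hk with hk | hk <;>
    split_ifs at hk ⊢ <;> omega

theorem isSupportPair_chain (t : Fin (2 * l + 1)) :
    IsSupportPair l (chain l t.castSucc).1 (dualIndex (chain l t.succ)).1 := by
  have := t.isLt
  simp only [chain, dualIndex, Fin.val_castSucc, Fin.val_succ]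
  rcases lt_trichotomy t.1 l with ht | ht | ht
  · refine Or.inr ⟨l + 1 - t.1, by omega, by omega, Or.inr (Or.inr (Or.inr (Or.inl ?_)))⟩
    constructor <;> split_ifs <;> omega
  · refine Or.inl ?_
    constructor <;> split_ifs <;> first | omega | simp_all
  · refine Or.inr ⟨t.1 + 1 - l, by omega, by omega, Or.inr (Or.inr (Or.inr (Or.inr ?_)))⟩
    constructor <;> split_ifs <;> first | omega | simp_all

variable {b : Basis (Fin (2 * l + 4)) ℝ (Fin (2 * l + 4) → ℝ)} {c : ℝ}
  {g : (Fin (2 * l + 4) → ℝ) →ₗ[ℝ] (Fin (2 * l + 4) → ℝ) →ₗ[ℝ] ℝ}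
  {R : MultilinearMap ℝ (fun _ : Fin 4 => (Fin (2 * l + 4) → ℝ)) ℝ}

def VanishesOffSupport (b : Basis (Fin (2 * l + 4)) ℝ (Fin (2 * l + 4) → ℝ))
    (R : MultilinearMap ℝ (fun _ : Fin 4 => (Fin (2 * l + 4) → ℝ)) ℝ) : Prop :=
  ∀ i₁ i₂ i₃ i₄ : Fin (2 * l + 4),
    ¬(∃ w₁ w₂ : ℕ,
      ((i₁.1 = 0 ∧ i₂.1 = w₁) ∨ (i₂.1 = 0 ∧ i₁.1 = w₁)) ∧
      ((i₃.1 = 0 ∧ i₄.1 = w₂) ∨ (i₄.1 = 0 ∧ i₃.1 = w₂)) ∧ IsSupportPair l w₁ w₂) →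
    R ![b i₁, b i₂, b i₃, b i₄] = 0

theorem apply_basis_eq_gram (hgsym : ∀ v w, g v w = g w v)
    (hgXX : g (b 0) (b 0) = c) (hgXY : g (b 0) (b (Fin.last _)) = 1)
    (hgUV : ∀ (a a' : ℕ) (ha : a < 2 * l + 4) (ha' : l + 1 + a' < 2 * l + 4),
      1 ≤ a → a ≤ l + 1 → 1 ≤ a' → a' ≤ l + 1 →
      g (b ⟨a, ha⟩) (b ⟨l + 1 + a', ha'⟩) = if a = a' then 1 else 0)
    (hg0 : ∀ i j : Fin (2 * l + 4),
      ¬((i.1 = 0 ∧ j.1 = 0) ∨ (i.1 = 0 ∧ j.1 = 2 * l + 3) ∨ (j.1 = 0 ∧ i.1 = 2 * l + 3) ∨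
        (1 ≤ i.1 ∧ i.1 ≤ l + 1 ∧ j.1 = l + 1 + i.1) ∨
        (1 ≤ j.1 ∧ j.1 ≤ l + 1 ∧ i.1 = l + 1 + j.1)) →
      g (b i) (b j) = 0)
    (i j : Fin (2 * l + 4)) : g (b i) (b j) = gram c i j := by
  wlog hij : i.1 ≤ j.1 generalizing i j
  · rw [hgsym, this j i (by omega), gram_comm]
  have := j.isLt
  by_cases hXX : i.1 = 0 ∧ j.1 = 0
  · rw [show i = 0 from Fin.ext hXX.1, show j = 0 from Fin.ext hXX.2, hgXX]
    simp [gram, dualIndex, Fin.ext_iff]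
  by_cases hXY : i.1 = 0 ∧ j.1 = 2 * l + 3
  · rw [show i = 0 from Fin.ext hXY.1, show j = Fin.last _ from Fin.ext hXY.2, hgXY]
    simp [gram, dualIndex, Fin.ext_iff]
  by_cases hUV : 1 ≤ i.1 ∧ i.1 ≤ l + 1 ∧ l + 2 ≤ j.1 ∧ j.1 ≤ 2 * l + 2
  · rw [show j = ⟨l + 1 + (j.1 - (l + 1)), by omega⟩ from Fin.ext (by simp; omega),
      hgUV i.1 (j.1 - (l + 1)) i.isLt (by omega) hUV.1 hUV.2.1 (by omega) (by omega)]
    simp only [gram, dualIndex, Fin.ext_iff]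
    split_ifs <;> first | rfl | omega
  · rw [hg0 i j (by omega)]
    simp only [gram, dualIndex, Fin.ext_iff]
    split_ifs <;> first | rfl | omega

theorem curvature_eq_zero
    (hvanish : VanishesOffSupport b R)
    {i m : Fin (2 * l + 4)}
    (h : ∀ w₁ w₂, IsSupportPair l w₁ w₂ → (i.1 = 0 ∨ i.1 = w₁) → (m.1 = 0 ∨ m.1 = w₂) → False)
    (ξ η : Fin (2 * l + 4) → ℝ) : R ![b i, ξ, η, b m] = 0 := by
  refine R.map_eq_zero_of_basis b _ fun r hr => ?_
  have h0 : r 0 = i := by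
    by_contra hne
    exact hr 0 (by simp [Ne.symm hne])
  have h3 : r 3 = m := by
    by_contra hne
    exact hr 3 (by simp [Ne.symm hne])
  have hr' : b ∘ r = ![b i, b (r 1), b (r 2), b m] := by
    funext s
    fin_cases s <;> simp [h0, h3]
  rw [hr']
  refine hvanish _ _ _ _ fun ⟨w₁, w₂, h₁, h₂, hw⟩ => h w₁ w₂ hw (by omega) (by omega)

theorem curvature_X_X_of_not_isSupportPair
    (hvanish : VanishesOffSupport b R)
    {i m : Fin (2 * l + 4)} (h : ¬IsSupportPair l i.1 m.1) :
    R ![b i, b 0, b 0, b m] = 0 := by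
  refine hvanish _ _ _ _ ?_
  rintro ⟨w₁, w₂, h₁, h₂, hw⟩
  apply h
  have := hw.bounds
  simp only [Fin.val_zero] at h₁ h₂
  obtain rfl : i.1 = w₁ := by omega
  obtain rfl : m.1 = w₂ := by omega
  exact hw

theorem curvature_X_X_of_isSupportPair
    (hsym1 : ∀ x₁ x₂ x₃ x₄, R ![x₁, x₂, x₃, x₄] = -R ![x₂, x₁, x₃, x₄])
    (hsym2 : ∀ x₁ x₂ x₃ x₄, R ![x₁, x₂, x₃, x₄] = -R ![x₁, x₂, x₄, x₃])
    (hsym3 : ∀ x₁ x₂ x₃ x₄, R ![x₁, x₂, x₃, x₄] = R ![x₃, x₄, x₁, x₂])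
    (hval1 : R ![b 0, b 1, b 1, b 0] = 1)
    (hval2 : ∀ (a : ℕ) (ha : a < 2 * l + 4), 2 ≤ a → a ≤ l + 1 →
      R ![b 0, b ⟨a, ha⟩, b ⟨a, ha⟩, b 0] = 1)
    (hval3 : ∀ (a : ℕ) (ha : a < 2 * l + 4) (ha' : a - 1 < 2 * l + 4), 2 ≤ a → a ≤ l + 1 →
      R ![b 0, b ⟨a, ha⟩, b ⟨a - 1, ha'⟩, b 0] = 1)
    (hval4 : ∀ (a : ℕ) (ha : a < 2 * l + 4) (ha' : l + a < 2 * l + 4), 2 ≤ a → a ≤ l + 1 →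
      R ![b 0, b ⟨a, ha⟩, b ⟨l + a, ha'⟩, b 0] = 1)
    {i m : Fin (2 * l + 4)} (h : IsSupportPair l i.1 m.1) :
    R ![b i, b 0, b 0, b m] = 1 := by
  have hflip : ∀ x₁ x₂ x₃ x₄, R ![x₁, x₂, x₃, x₄] = R ![x₂, x₁, x₄, x₃] := fun _ _ _ _ => by
    rw [hsym1, hsym2, neg_neg]
  have hswap : ∀ u w, R ![b 0, u, w, b 0] = R ![b 0, w, u, b 0] := fun u w => by
    rw [hsym3, hflip]
  obtain ⟨i, hi⟩ := i
  obtain ⟨m, hm⟩ := m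
  dsimp only at h
  rw [hflip]
  rcases h with
    ⟨rfl, rfl⟩ | ⟨a, ha, ha', ⟨rfl, rfl⟩ | ⟨rfl, rfl⟩ | ⟨rfl, rfl⟩ | ⟨rfl, rfl⟩ | ⟨rfl, rfl⟩⟩
  · exact hval1
  · exact hval2 _ _ ha ha'
  · exact hval3 _ _ _ ha ha'
  · rw [hswap]
    exact hval3 _ _ _ ha ha'
  · exact hval4 _ _ _ ha ha'
  · rw [hswap]
    exact hval4 _ _ _ ha ha'

theorem toMatrix_jacobi_apply (hG : ∀ i j, g (b i) (b j) = gram c i j)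
    (hvanish : VanishesOffSupport b R)
    {J : (Fin (2 * l + 4) → ℝ) → Module.End ℝ (Fin (2 * l + 4) → ℝ)}
    (hJ : ∀ ξ y z, g (J ξ y) z = R ![y, ξ, ξ, z]) (ξ : Fin (2 * l + 4) → ℝ)
    (k i : Fin (2 * l + 4)) :
    LinearMap.toMatrix b b (J ξ) k i = R ![b i, ξ, ξ, b (dualIndex k)] := by
  rw [LinearMap.toMatrix_apply]
  by_cases hk : k.1 = 2 * l + 3
  · obtain rfl : k = Fin.last _ := Fin.ext hk
    have hdual : ∀ j, g (b j) (b 0 - c • b (Fin.last _)) = if j = Fin.last _ then 1 else 0 :=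
      fun j => by rw [map_sub, map_smul, smul_eq_mul, hG, hG, gram_X_sub_mul_gram_Y]
    have hY : R ![b i, ξ, ξ, b (Fin.last _)] = 0 := curvature_eq_zero hvanish
      (fun w₁ w₂ hw _ hm => by have := hw.bounds; simp only [Fin.val_last] at hm; omega) ξ ξ
    have hk0 : dualIndex (Fin.last (2 * l + 3)) = 0 :=
      Fin.ext (by simp only [dualIndex, Fin.val_last, Fin.val_zero]; split_ifs <;> omega)
    rw [b.repr_apply_eq_of_dual g hdual, map_sub, map_smul, hJ, hJ, hY, smul_zero, sub_zero, hk0]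
  · rw [b.repr_apply_eq_of_dual g fun j => (hG j _).trans (gram_dualIndex c j hk), hJ]

theorem jacobi_pow_eq_zero (hG : ∀ i j, g (b i) (b j) = gram c i j)
    (hvanish : VanishesOffSupport b R)
    {J : (Fin (2 * l + 4) → ℝ) → Module.End ℝ (Fin (2 * l + 4) → ℝ)}
    (hJ : ∀ ξ y z, g (J ξ y) z = R ![y, ξ, ξ, z]) (ξ : Fin (2 * l + 4) → ℝ) :
    J ξ ^ (2 * l + 2) = 0 := by
  apply (LinearMap.toMatrix b b).injective
  rw [← LinearMap.toMatrix_pow, map_zero]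
  refine Matrix.pow_eq_zero_of_lt_grading (h := height) (fun k i hki => ?_)
    height_lt_two_mul_add_two
  rw [toMatrix_jacobi_apply hG hvanish hJ] at hki
  by_contra hle
  exact hki (curvature_eq_zero hvanish (fun _ _ hw hi hk => hle (height_lt_height hw hi hk)) ξ ξ)

theorem jacobi_pow_ne_zero (hG : ∀ i j, g (b i) (b j) = gram c i j)
    (hvanish : VanishesOffSupport b R)
    (hX : ∀ i m, IsSupportPair l i.1 m.1 → R ![b i, b 0, b 0, b m] = 1)
    {J : (Fin (2 * l + 4) → ℝ) → Module.End ℝ (Fin (2 * l + 4) → ℝ)}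
    (hJ : ∀ ξ y z, g (J ξ y) z = R ![y, ξ, ξ, z]) :
    J (b 0) ^ (2 * l + 1) ≠ 0 := by
  set A := LinearMap.toMatrix b b (J (b 0))
  have hA : ∀ k i, A k i = R ![b i, b 0, b 0, b (dualIndex k)] :=
    toMatrix_jacobi_apply hG hvanish hJ _
  have hA_nonneg : ∀ k i, 0 ≤ A k i := fun k i => by
    by_cases h : IsSupportPair l i.1 (dualIndex k).1
    · rw [hA, hX _ _ h]
      exact zero_le_one
    · rw [hA, curvature_X_X_of_not_isSupportPair hvanish h]
  have hchain := Matrix.one_le_pow_apply_of_chain hA_nonneg (chain l)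
    fun t => ((hA _ _).trans (hX _ _ (isSupportPair_chain t))).ge
  intro h0
  rw [LinearMap.toMatrix_pow, h0, map_zero] at hchain
  norm_num at hchain

theorem exists_basis_signature (hgsym : ∀ v w, g v w = g w v)
    (hG : ∀ i j, g (b i) (b j) = gram c i j) :
    ∃ e : Basis (Fin (l + 2) ⊕ Fin (l + 2)) ℝ (Fin (2 * l + 4) → ℝ), ∀ i j,
      g (e i) (e j) = if i = j then Sum.elim (fun _ => (1 : ℝ)) (fun _ => (-1 : ℝ)) i else 0 := by
  have hle : l + 2 ≤ 2 * l + 4 := by omega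
  have hU : ∀ a : Fin (l + 2), l + 2 ≤ (dualIndex (Fin.castLE hle a)).1 := fun a =>
    le_dualIndex (by simp; omega)
  have hf := LinearMap.apply_hyperbolicFrame hgsym (x := fun a => b (Fin.castLE hle a))
    (y := fun a => b (dualIndex (Fin.castLE hle a))) (c := fun a => if a.1 = 0 then c else 0)
    (fun a a' => by
      rw [hG, gram, if_neg fun h => by have := hU a; rw [← h] at this; simp at this; omega]
      simp only [Fin.val_castLE, Fin.ext_iff]
      split_ifs <;> first | rfl | omega)
    (fun a a' => by
      rw [hG, gram_dualIndex c _ (by simp; omega)]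
      simp [Fin.ext_iff])
    (fun a a' => by
      rw [hG, gram_dualIndex c _ (by simp; omega),
        if_neg fun h => by have := hU a; rw [h] at this; simp at this; omega])
  obtain ⟨e, he⟩ := LinearMap.exists_basis_of_gram_diagonal hf (fun p => by cases p <;> simp)
    (by simp; omega)
  exact ⟨e, he ▸ hf⟩

end NilpotentOsserman

open NilpotentOsserman

/-- the even-order Osserman example. On `ℝ^{2ℓ+4}` with basis
`X = b 0`, `U_a = b a` (`1 ≤ a ≤ ℓ+1`), `V_a = b (ℓ+1+a)` (`1 ≤ a ≤ ℓ+1`), `Y = b (2ℓ+3)`,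
take `g(X,X) = c`, `g(X,Y) = 1`, `g(U_a,V_b) = δ_{ab}`, all other products `0`, and the
4-linear form `R` whose only nonzero components up to the usual symmetries are
`R(X,U₁,U₁,X) = 1` and, for `2 ≤ a ≤ ℓ+1`,
`R(X,U_a,U_a,X) = R(X,U_a,U_{a-1},X) = R(X,U_a,V_{a-1},X) = 1`. Then `g` has signature
`(ℓ+2,ℓ+2)`, and the Jacobi operator satisfies `J(ξ)^{2ℓ+2} = 0` for all `ξ` while
`J(ξ₀)^{2ℓ+1} ≠ 0` for some `ξ₀`. -/
theorem osserman_nilpotent_even_order (l : ℕ)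
    (b : Module.Basis (Fin (2 * l + 4)) ℝ (Fin (2 * l + 4) → ℝ)) (c : ℝ)
    (g : (Fin (2 * l + 4) → ℝ) →ₗ[ℝ] (Fin (2 * l + 4) → ℝ) →ₗ[ℝ] ℝ)
    (hgsym : ∀ v w, g v w = g w v)
    (hgXX : g (b ⟨0, by omega⟩) (b ⟨0, by omega⟩) = c)
    (hgXY : g (b ⟨0, by omega⟩) (b ⟨2 * l + 3, by omega⟩) = 1)
    (hgUV : ∀ (a a' : ℕ) (ha : 1 ≤ a) (ha' : a ≤ l + 1) (hb : 1 ≤ a') (hb' : a' ≤ l + 1),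
      g (b ⟨a, by omega⟩) (b ⟨l + 1 + a', by omega⟩) = if a = a' then 1 else 0)
    (hg0 : ∀ i j : Fin (2 * l + 4),
      ¬((i.1 = 0 ∧ j.1 = 0) ∨ (i.1 = 0 ∧ j.1 = 2 * l + 3) ∨ (j.1 = 0 ∧ i.1 = 2 * l + 3) ∨
        (1 ≤ i.1 ∧ i.1 ≤ l + 1 ∧ j.1 = l + 1 + i.1) ∨
        (1 ≤ j.1 ∧ j.1 ≤ l + 1 ∧ i.1 = l + 1 + j.1)) →
      g (b i) (b j) = 0)
    (R : MultilinearMap ℝ (fun _ : Fin 4 => (Fin (2 * l + 4) → ℝ)) ℝ)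
    (hsym1 : ∀ x₁ x₂ x₃ x₄, R ![x₁, x₂, x₃, x₄] = -R ![x₂, x₁, x₃, x₄])
    (hsym2 : ∀ x₁ x₂ x₃ x₄, R ![x₁, x₂, x₃, x₄] = -R ![x₁, x₂, x₄, x₃])
    (hsym3 : ∀ x₁ x₂ x₃ x₄, R ![x₁, x₂, x₃, x₄] = R ![x₃, x₄, x₁, x₂])
    (hval1 : R ![b ⟨0, by omega⟩, b ⟨1, by omega⟩, b ⟨1, by omega⟩, b ⟨0, by omega⟩] = 1)
    (hval2 : ∀ (a : ℕ) (ha : 2 ≤ a) (ha' : a ≤ l + 1),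
      R ![b ⟨0, by omega⟩, b ⟨a, by omega⟩, b ⟨a, by omega⟩, b ⟨0, by omega⟩] = 1)
    (hval3 : ∀ (a : ℕ) (ha : 2 ≤ a) (ha' : a ≤ l + 1),
      R ![b ⟨0, by omega⟩, b ⟨a, by omega⟩, b ⟨a - 1, by omega⟩, b ⟨0, by omega⟩] = 1)
    (hval4 : ∀ (a : ℕ) (ha : 2 ≤ a) (ha' : a ≤ l + 1),
      R ![b ⟨0, by omega⟩, b ⟨a, by omega⟩, b ⟨l + a, by omega⟩, b ⟨0, by omega⟩] = 1)
    (hvanish : ∀ i₁ i₂ i₃ i₄ : Fin (2 * l + 4),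
      ¬(∃ w₁ w₂ : ℕ,
        ((i₁.1 = 0 ∧ i₂.1 = w₁) ∨ (i₂.1 = 0 ∧ i₁.1 = w₁)) ∧
        ((i₃.1 = 0 ∧ i₄.1 = w₂) ∨ (i₄.1 = 0 ∧ i₃.1 = w₂)) ∧
        ((w₁ = 1 ∧ w₂ = 1) ∨
         ∃ a : ℕ, 2 ≤ a ∧ a ≤ l + 1 ∧
           ((w₁ = a ∧ w₂ = a) ∨ (w₁ = a ∧ w₂ = a - 1) ∨ (w₁ = a - 1 ∧ w₂ = a) ∨
            (w₁ = a ∧ w₂ = l + a) ∨ (w₁ = l + a ∧ w₂ = a)))) →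
      R ![b i₁, b i₂, b i₃, b i₄] = 0) :
    (∃ e : Module.Basis (Fin (l + 2) ⊕ Fin (l + 2)) ℝ (Fin (2 * l + 4) → ℝ), ∀ i j,
      g (e i) (e j) =
        if i = j then Sum.elim (fun _ => (1 : ℝ)) (fun _ => (-1 : ℝ)) i else 0) ∧
    (∀ v, (∀ w, g v w = 0) → v = 0) ∧
    (∀ J : (Fin (2 * l + 4) → ℝ) → Module.End ℝ (Fin (2 * l + 4) → ℝ),
      (∀ ξ y z, g (J ξ y) z = R ![y, ξ, ξ, z]) →
      (∀ ξ, J ξ ^ (2 * l + 2) = 0) ∧ ∃ ξ₀, J ξ₀ ^ (2 * l + 1) ≠ 0) := by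
  have hG := apply_basis_eq_gram hgsym hgXX hgXY (fun a a' _ _ => hgUV a a') hg0
  have hX := fun i m => curvature_X_X_of_isSupportPair (i := i) (m := m) hsym1 hsym2 hsym3 hval1
    (fun a _ => hval2 a) (fun a _ _ => hval3 a) (fun a _ _ => hval4 a)
  obtain ⟨e, he⟩ := exists_basis_signature hgsym hG
  refine ⟨⟨e, he⟩, LinearMap.separatingLeft_of_gram_diagonal e he (fun p => by cases p <;> simp),
    fun J hJ => ⟨jacobi_pow_eq_zero hG hvanish hJ, _, jacobi_pow_ne_zero hG hvanish hX hJ⟩⟩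
end

section
/- Let {X,U,V,Y} be a basis of ℝ^4 and c ∈ ℝ. Let g be the symmetric bilinear form with g(X,X) = c, g(X,Y) = 1, g(U,V) = 1, all other products 0, and let R be the 4-linear form whose only nonzero components, up to the symmetries R(x_1,x_2,x_3,x_4) = −R(x_2,x_1,x_3,x_4) = −R(x_1,x_2,x_4,x_3) = R(x_3,x_4,x_1,x_2), are R(X,U,U,X) = 1. Then for every pair of vectors f_1, f_2 ∈ ℝ^4 with g(f_1,f_1) = ±1, g(f_2,f_2) = ±1 and g(f_1,f_2) = 0, the skew-symmetric curvature operator ℛ(f_1,f_2) satisfies ℛ(f_1,f_2)² = 0; moreover there exists such a pair (f_1,f_2) with ℛ(f_1,f_2) ≠ 0. -/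
/-!
With `X, U, V, Y = b 0, b 1, b 2, b 3`, the plane `W = span {V, Y}` is Lagrangian for `g`
(`W^⊥ = W`), and `R` vanishes as soon as one argument lies in `W`. Hence
`g (ℛ y) w = R(f₁, f₂, y, w) = 0` for `w ∈ W`, so `ℛ y ∈ W^⊥ = W`, and then
`g (ℛ (ℛ y)) z = R(f₁, f₂, ℛ y, z) = 0` for all `z`, so `ℛ² = 0` by nondegeneracy. The pair
`f₁ = X + (1 - c)/2 • Y`, `f₂ = U + V/2` is orthonormal and `R(f₁, f₂, U, X) = R(X, U, U, X) = 1`.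
-/

namespace MultilinearMap

section CommSemiring

variable {R ι κ M N : Type*} [CommSemiring R] [AddCommMonoid M] [Module R M]
  [AddCommMonoid N] [Module R N] [Fintype ι] [DecidableEq ι] [Fintype κ]

theorem map_eq_zero_of_mem_span_basis (f : MultilinearMap R (fun _ : ι => M) N)
    (b : Module.Basis κ R M) {k : ι} {S : Set κ}
    (hf : ∀ σ : ι → κ, σ k ∈ S → f (b ∘ σ) = 0) {v : ι → M}
    (hv : v k ∈ Submodule.span R (b '' S)) : f v = 0 := by
  have hexp : f v = ∑ σ : ι → κ, (∏ i, b.repr (v i) (σ i)) • f (b ∘ σ) := by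
    conv_lhs => rw [← funext fun i => b.sum_repr (v i)]
    rw [f.map_sum]
    exact Finset.sum_congr rfl fun σ _ => f.map_smul_univ _ (b ∘ σ)
  rw [hexp]
  refine Finset.sum_eq_zero fun σ _ => ?_
  by_cases hσ : σ k ∈ S
  · rw [hf σ hσ, smul_zero]
  · have : b.repr (v k) (σ k) = 0 :=
      Finsupp.notMem_support_iff.mp fun h => hσ (b.mem_span_image.mp hv h)
    rw [Finset.prod_eq_zero (Finset.mem_univ k) this, zero_smul]

end CommSemiring

variable {R ι κ M N : Type*} [CommRing R] [AddCommGroup M] [Module R M]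
  [AddCommGroup N] [Module R N] [Fintype ι] [DecidableEq ι] [Fintype κ]

theorem map_eq_of_sub_mem_span_basis (f : MultilinearMap R (fun _ : ι => M) N)
    (b : Module.Basis κ R M) {k : ι} {S : Set κ}
    (hf : ∀ σ : ι → κ, σ k ∈ S → f (b ∘ σ) = 0) {v w : ι → M} (hvw : ∀ i ≠ k, v i = w i)
    (hk : v k - w k ∈ Submodule.span R (b '' S)) : f v = f w := by
  have hv : v = Function.update w k (w k + (v k - w k)) :=
    Function.eq_update_iff.mpr ⟨(add_sub_cancel (w k) (v k)).symm, hvw⟩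
  rw [hv, f.map_update_add, Function.update_eq_self,
    f.map_eq_zero_of_mem_span_basis b hf (v := Function.update w k (v k - w k))
      (by rwa [Function.update_self]), add_zero]

end MultilinearMap

namespace LinearMap

variable {R M κ : Type*} [CommSemiring R] [AddCommMonoid M] [Module R M] [DecidableEq κ]

def IsDualFamily (g : M →ₗ[R] M →ₗ[R] R) (b w : κ → M) : Prop :=
  ∀ l i, g (b l) (w i) = if l = i then 1 else 0

variable {g : M →ₗ[R] M →ₗ[R] R} {b : Module.Basis κ R M} {w : κ → M}

theorem IsDualFamily.apply_eq_repr (hw : g.IsDualFamily b w) (v : M) (i : κ) :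
    g v (w i) = b.repr v i :=
  LinearMap.congr_fun (b.ext (f₁ := g.flip (w i)) (f₂ := b.coord i) fun l => by
    simp [hw l i, Finsupp.single_apply]) v

theorem IsDualFamily.mem_span_image (hw : g.IsDualFamily b w) {S : Set κ} {v : M}
    (hv : ∀ i ∉ S, g v (w i) = 0) : v ∈ Submodule.span R (b '' S) :=
  b.mem_span_image.mpr fun i hi => by_contra fun hiS =>
    (Finsupp.mem_support_iff.mp hi) (by rw [← hw.apply_eq_repr, hv i hiS])

theorem IsDualFamily.eq_zero (hw : g.IsDualFamily b w) {v : M} (hv : ∀ z, g v z = 0) :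
    v = 0 := by
  simpa using hw.mem_span_image (S := ∅) fun i _ => hv (w i)

end LinearMap

namespace Module.End

variable {R M : Type*} [CommSemiring R] [AddCommMonoid M] [Module R M]

theorem sq_eq_zero_of_coisotropic (g : M →ₗ[R] M →ₗ[R] R)
    (hg : ∀ v, (∀ z, g v z = 0) → v = 0) (W : Submodule R M)
    (hW : ∀ v, (∀ w ∈ W, g v w = 0) → v ∈ W) (ρ : M → M → R)
    (hρ_right : ∀ y, ∀ w ∈ W, ρ y w = 0) (hρ_left : ∀ w ∈ W, ∀ z, ρ w z = 0)
    (T : Module.End R M) (hT : ∀ y z, g (T y) z = ρ y z) : T ^ 2 = 0 := by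
  ext y : 1
  have hTy : T y ∈ W := hW _ fun w hw => (hT y w).trans (hρ_right y w hw)
  exact hg _ fun z => (hT (T y) z).trans (hρ_left _ hTy z)

end Module.End

section Fin4

variable {M N : Type*} [AddCommGroup M] [Module ℝ M] [AddCommGroup N] [Module ℝ N]
  {b : Module.Basis (Fin 4) ℝ M}

theorem isDualFamily_of_gram {g : M →ₗ[ℝ] M →ₗ[ℝ] ℝ} {c : ℝ}
    (hg : ∀ i j, g (b i) (b j) = !![c, 0, 0, 1; 0, 0, 1, 0; 0, 1, 0, 0; 1, 0, 0, 0] i j) :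
    g.IsDualFamily b ![b 3, b 2, b 1, b 0 - c • b 3] := by
  intro l i
  fin_cases l <;> fin_cases i <;> simp [hg]

theorem MultilinearMap.apply_add_smul_eq {R : MultilinearMap ℝ (fun _ : Fin 4 => M) N}
    (hR : ∀ (k : Fin 4) (σ : Fin 4 → Fin 4), σ k ∈ ({2, 3} : Set (Fin 4)) → R (b ∘ σ) = 0)
    (s t : ℝ) : R ![b 0 + s • b 3, b 1 + t • b 2, b 1, b 0] = R ![b 0, b 1, b 1, b 0] :=
  calc R ![b 0 + s • b 3, b 1 + t • b 2, b 1, b 0]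
      = R ![b 0, b 1 + t • b 2, b 1, b 0] :=
        R.map_eq_of_sub_mem_span_basis b (hR 0) (by intro i hi; fin_cases i <;> simp_all)
          (by simpa using Submodule.smul_mem _ _ (by simp))
    _ = R ![b 0, b 1, b 1, b 0] :=
        R.map_eq_of_sub_mem_span_basis b (hR 1) (by intro i hi; fin_cases i <;> simp_all)
          (by simpa using Submodule.smul_mem _ _ (by simp))

end Fin4

theorem ip_nilpotent_order_two_R4_general
    (b : Module.Basis (Fin 4) ℝ (Fin 4 → ℝ)) (c : ℝ)
    (g : (Fin 4 → ℝ) →ₗ[ℝ] (Fin 4 → ℝ) →ₗ[ℝ] ℝ)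
    (hgsym : ∀ v w, g v w = g w v)
    (hgXX : g (b 0) (b 0) = c)
    (hgXY : g (b 0) (b 3) = 1)
    (hgUV : g (b 1) (b 2) = 1)
    (hg0 : ∀ i j : Fin 4,
      ¬((i = 0 ∧ j = 0) ∨ (i = 0 ∧ j = 3) ∨ (i = 3 ∧ j = 0) ∨
        (i = 1 ∧ j = 2) ∨ (i = 2 ∧ j = 1)) →
      g (b i) (b j) = 0)
    (R : MultilinearMap ℝ (fun _ : Fin 4 => (Fin 4 → ℝ)) ℝ)
    (hval : R ![b 0, b 1, b 1, b 0] = 1)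
    (hvanish : ∀ i₁ i₂ i₃ i₄ : Fin 4,
      ¬(((i₁ = 0 ∧ i₂ = 1) ∨ (i₁ = 1 ∧ i₂ = 0)) ∧
        ((i₃ = 1 ∧ i₄ = 0) ∨ (i₃ = 0 ∧ i₄ = 1))) →
      R ![b i₁, b i₂, b i₃, b i₄] = 0) :
    (∀ f₁ f₂ : Fin 4 → ℝ,
      (g f₁ f₁ = 1 ∨ g f₁ f₁ = -1) → (g f₂ f₂ = 1 ∨ g f₂ f₂ = -1) → g f₁ f₂ = 0 →
      ∀ Rop : Module.End ℝ (Fin 4 → ℝ),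
        (∀ y z, g (Rop y) z = R ![f₁, f₂, y, z]) → Rop ^ 2 = 0) ∧
    (∃ f₁ f₂ : Fin 4 → ℝ,
      (g f₁ f₁ = 1 ∨ g f₁ f₁ = -1) ∧ (g f₂ f₂ = 1 ∨ g f₂ f₂ = -1) ∧ g f₁ f₂ = 0 ∧
      ∀ Rop : Module.End ℝ (Fin 4 → ℝ),
        (∀ y z, g (Rop y) z = R ![f₁, f₂, y, z]) → Rop ≠ 0) := by
  have gram : ∀ i j, g (b i) (b j) = !![c, 0, 0, 1; 0, 0, 1, 0; 0, 1, 0, 0; 1, 0, 0, 0] i j := by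
    intro i j
    fin_cases i <;> fin_cases j <;>
      simp [hgXX, hgXY, hgUV, hgsym (b 3) (b 0), hgsym (b 2) (b 1), hg0]
  have dual := isDualFamily_of_gram gram
  have hR : ∀ (k : Fin 4) (σ : Fin 4 → Fin 4), σ k ∈ ({2, 3} : Set (Fin 4)) → R (b ∘ σ) = 0 := by
    intro k σ hk
    rw [show b ∘ σ = ![b (σ 0), b (σ 1), b (σ 2), b (σ 3)] by ext i; fin_cases i <;> rfl]
    refine hvanish _ _ _ _ fun hσ => ?_
    have h01 : ∀ i, σ i = 0 ∨ σ i = 1 := by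
      intro i; fin_cases i <;> simp <;> tauto
    rcases h01 k with h | h <;> simp [h] at hk
  refine ⟨fun f₁ f₂ _ _ _ Rop hRop => ?_, ?_⟩
  · refine Module.End.sq_eq_zero_of_coisotropic g (fun v => dual.eq_zero)
      (Submodule.span ℝ (b '' {2, 3})) (fun v hv => dual.mem_span_image fun i hi => hv _ ?_)
      (fun y z => R ![f₁, f₂, y, z])
      (fun y w hw => R.map_eq_zero_of_mem_span_basis b (hR 3) (by simpa using hw))
      (fun w hw z => R.map_eq_zero_of_mem_span_basis b (hR 2) (by simpa using hw)) Rop hRop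
    fin_cases i <;> simp at hi ⊢
  · refine ⟨b 0 + ((1 - c) / 2) • b 3, b 1 + (1 / 2 : ℝ) • b 2, Or.inl ?_, Or.inl ?_, ?_,
      fun Rop hRop hzero => ?_⟩
    · simp [gram]; ring
    · simp [gram]; norm_num
    · simp [gram]
    have h := hRop (b 1) (b 0)
    rw [R.apply_add_smul_eq hR, hval, hzero] at h
    simp at h

/-- for the inner product with `g(X,X) = c`, `g(X,Y) = g(U,V) = 1` on `ℝ⁴`
(basis `X = b 0`, `U = b 1`, `V = b 2`, `Y = b 3`) and the 4-linear form with
`R(X,U,U,X) = 1` as its only nonzero component up to the usual symmetries, the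
skew-symmetric curvature operator `ℛ(f₁,f₂)`, defined by
`g(ℛ(f₁,f₂)y,z) = R(f₁,f₂,y,z)` for `f₁, f₂` an orthonormal pair, satisfies
`ℛ(f₁,f₂)² = 0` for every such pair, and `ℛ(f₁,f₂) ≠ 0` for some such pair. -/
theorem ip_nilpotent_order_two_R4
    (b : Module.Basis (Fin 4) ℝ (Fin 4 → ℝ)) (c : ℝ)
    (g : (Fin 4 → ℝ) →ₗ[ℝ] (Fin 4 → ℝ) →ₗ[ℝ] ℝ)
    (hgsym : ∀ v w, g v w = g w v)
    (hgXX : g (b 0) (b 0) = c)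
    (hgXY : g (b 0) (b 3) = 1)
    (hgUV : g (b 1) (b 2) = 1)
    (hg0 : ∀ i j : Fin 4,
      ¬((i = 0 ∧ j = 0) ∨ (i = 0 ∧ j = 3) ∨ (i = 3 ∧ j = 0) ∨
        (i = 1 ∧ j = 2) ∨ (i = 2 ∧ j = 1)) →
      g (b i) (b j) = 0)
    (R : MultilinearMap ℝ (fun _ : Fin 4 => (Fin 4 → ℝ)) ℝ)
    (hsym1 : ∀ x₁ x₂ x₃ x₄, R ![x₁, x₂, x₃, x₄] = -R ![x₂, x₁, x₃, x₄])
    (hsym2 : ∀ x₁ x₂ x₃ x₄, R ![x₁, x₂, x₃, x₄] = -R ![x₁, x₂, x₄, x₃])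
    (hsym3 : ∀ x₁ x₂ x₃ x₄, R ![x₁, x₂, x₃, x₄] = R ![x₃, x₄, x₁, x₂])
    (hval : R ![b 0, b 1, b 1, b 0] = 1)
    (hvanish : ∀ i₁ i₂ i₃ i₄ : Fin 4,
      ¬(((i₁ = 0 ∧ i₂ = 1) ∨ (i₁ = 1 ∧ i₂ = 0)) ∧
        ((i₃ = 1 ∧ i₄ = 0) ∨ (i₃ = 0 ∧ i₄ = 1))) →
      R ![b i₁, b i₂, b i₃, b i₄] = 0) :
    (∀ f₁ f₂ : Fin 4 → ℝ,
      (g f₁ f₁ = 1 ∨ g f₁ f₁ = -1) → (g f₂ f₂ = 1 ∨ g f₂ f₂ = -1) → g f₁ f₂ = 0 →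
      ∀ Rop : Module.End ℝ (Fin 4 → ℝ),
        (∀ y z, g (Rop y) z = R ![f₁, f₂, y, z]) → Rop ^ 2 = 0) ∧
    (∃ f₁ f₂ : Fin 4 → ℝ,
      (g f₁ f₁ = 1 ∨ g f₁ f₁ = -1) ∧ (g f₂ f₂ = 1 ∨ g f₂ f₂ = -1) ∧ g f₁ f₂ = 0 ∧
      ∀ Rop : Module.End ℝ (Fin 4 → ℝ),
        (∀ y z, g (Rop y) z = R ![f₁, f₂, y, z]) → Rop ≠ 0) :=
  ip_nilpotent_order_two_R4_general b c g hgsym hgXX hgXY hgUV hg0 R hval hvanish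
end
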